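/- arXiv:1305.1089 — 6 statements merged into one kernel-verified Lean document; each statement's English description precedes it below -/
import Mathlib

section
/- For every two integers n and k with 2 ≤ k ≤ n, the generalized k-connectivity of the complete graph K_n satisfies κ_k(K_n) = n − ⌈k/2⌉. -/
open SimpleGraph

variable {V : Type*}

/-- An `S`-Steiner tree in `G`: a subgraph of `G` that is a tree and contains `S`. -/
def IsSteinerTree (G : SimpleGraph V) (S : Set V) (T : G.Subgraph) : Prop :=
  S ⊆ T.verts ∧ T.coe.IsTree

/-- Two Steiner trees are internally disjoint if they share no edges and their
vertex sets intersect exactly in `S`. -/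
def InternallyDisjoint {G : SimpleGraph V} (S : Set V) (T T' : G.Subgraph) : Prop :=
  T.edgeSet ∩ T'.edgeSet = ∅ ∧ T.verts ∩ T'.verts = S

/-- Two Steiner trees are edge-disjoint if they share no edges. -/
def EdgeDisjointTrees {G : SimpleGraph V} (T T' : G.Subgraph) : Prop :=
  T.edgeSet ∩ T'.edgeSet = ∅

/-- `κ(S)`: the maximum number of pairwise internally disjoint `S`-Steiner trees in `G`. -/
noncomputable def steinerConn (G : SimpleGraph V) (S : Set V) : ℕ :=
  sSup {m | ∃ f : Fin m → G.Subgraph, (∀ i, IsSteinerTree G S (f i)) ∧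
    ∀ i j, i ≠ j → InternallyDisjoint S (f i) (f j)}

/-- `λ(S)`: the maximum number of pairwise edge-disjoint `S`-Steiner trees in `G`. -/
noncomputable def steinerEdgeConn (G : SimpleGraph V) (S : Set V) : ℕ :=
  sSup {m | ∃ f : Fin m → G.Subgraph, (∀ i, IsSteinerTree G S (f i)) ∧
    ∀ i j, i ≠ j → EdgeDisjointTrees (f i) (f j)}

/-- The generalized `k`-connectivity `κ_k(G) = min { κ(S) : |S| = k }`. -/
noncomputable def genConn (G : SimpleGraph V) (k : ℕ) : ℕ :=
  sInf {m | ∃ S : Set V, S.ncard = k ∧ steinerConn G S = m}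

/-- The generalized `k`-edge-connectivity `λ_k(G) = min { λ(S) : |S| = k }`. -/
noncomputable def genEdgeConn (G : SimpleGraph V) (k : ℕ) : ℕ :=
  sInf {m | ∃ S : Set V, S.ncard = k ∧ steinerEdgeConn G S = m}

/-- `Δ(K_n[M])`: the maximum number of edges of `M` incident with a single vertex. -/
noncomputable def edgeMaxDeg {n : ℕ} (M : Set (Sym2 (Fin n))) : ℕ :=
  sSup {d | ∃ v : Fin n, d = {e ∈ M | v ∈ e}.ncard}


namespace KnAux

lemma acyclic_of_height {W : Type*} (G : SimpleGraph W) (h : W → ℕ)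
    (hne : ∀ v w, G.Adj v w → h v ≠ h w)
    (huniq : ∀ v w w', G.Adj v w → G.Adj v w' → h w < h v → h w' < h v → w = w') :
    G.IsAcyclic := by
  classical
  intro v c hc
  -- max-height vertex in support
  obtain ⟨u, hu⟩ : ∃ u, u ∈ List.argmax h c.support := by
    cases hh : List.argmax h c.support with
    | none => exact absurd (List.argmax_eq_none.mp hh) c.support_ne_nil
    | some m => exact ⟨m, by simp [hh]⟩
  have humem : u ∈ c.support := List.argmax_mem hu
  have hmax : ∀ x ∈ c.support, h x ≤ h u := fun x hx => List.le_of_mem_argmax hx hu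
  have key : ∀ (c' : G.Walk u u), c'.IsCycle → (∀ x ∈ c'.support, h x ≤ h u) → False := by
    intro c' hc' hsupp
    cases c' with
    | nil => exact hc'.ne_nil rfl
    | cons ha p =>
      rename_i b₁
      rw [SimpleGraph.Walk.cons_isCycle_iff] at hc'
      obtain ⟨hp, hedge⟩ := hc'
      have hb₁u : b₁ ≠ u := ha.ne'
      obtain ⟨b₂, ha2, q, hq⟩ := SimpleGraph.Walk.exists_eq_cons_of_ne (Ne.symm hb₁u) p.reverse
      have hb12 : b₂ ≠ b₁ := by
        rintro rfl
        apply hedge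
        have : s(u, b₂) ∈ p.reverse.edges := by rw [hq]; simp
        rwa [SimpleGraph.Walk.edges_reverse, List.mem_reverse] at this
      have hb₁s : b₁ ∈ (SimpleGraph.Walk.cons ha p).support := by
        simp [SimpleGraph.Walk.support_cons, p.start_mem_support]
      have hb₂s : b₂ ∈ (SimpleGraph.Walk.cons ha p).support := by
        have : b₂ ∈ p.reverse.support := by rw [hq]; simp
        rw [SimpleGraph.Walk.support_reverse, List.mem_reverse] at this
        simp [SimpleGraph.Walk.support_cons, this]
      have h1 : h b₁ < h u := lt_of_le_of_ne (hsupp _ hb₁s) (fun e => hne u b₁ ha e.symm)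
      have h2 : h b₂ < h u := lt_of_le_of_ne (hsupp _ hb₂s) (fun e => hne u b₂ ha2 e.symm)
      exact hb12 (huniq u b₂ b₁ ha2 ha h2 h1)
  apply key (c.rotate _ humem) (hc.rotate humem)
  intro x hx
  rw [SimpleGraph.Walk.support_eq_cons] at hx
  rcases List.mem_cons.mp hx with rfl | hx
  · exact le_rfl
  · exact hmax x (List.mem_of_mem_tail ((c.support_rotate _ humem).mem_iff.mp hx))


variable {n k : ℕ}

/-- zigzag offset -/
def dlt (k j : ℕ) : ZMod k := if j % 2 = 0 then -((j/2 : ℕ) : ZMod k) else ((j+1)/2 : ℕ)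

lemma cast_inj_of_lt {a b : ℕ} (ha : a < k) (hb : b < k) (h : (a : ZMod k) = b) : a = b := by
  have := congrArg ZMod.val h
  rwa [ZMod.val_cast_of_lt ha, ZMod.val_cast_of_lt hb] at this

lemma cast_sum_ne_zero {a b : ℕ} (hab : a + b < k) (hb : 0 < b) : (a : ZMod k) + b ≠ 0 := by
  intro h
  rw [← Nat.cast_add, ZMod.natCast_eq_zero_iff] at h
  rcases h with ⟨c, hc⟩
  rcases c with _ | c
  · omega
  · have : k * 1 ≤ k * (c+1) := Nat.mul_le_mul_left _ (by omega)
    omega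

lemma dlt_inj {j j' : ℕ} (hj : j < k) (hj' : j' < k) (h : dlt k j = dlt k j') : j = j' := by
  unfold dlt at h
  by_cases hp : j % 2 = 0 <;> by_cases hp' : j' % 2 = 0
  · rw [if_pos hp, if_pos hp', neg_inj] at h
    have := cast_inj_of_lt (k := k) (by omega) (by omega) h
    omega
  · rw [if_pos hp, if_neg hp'] at h
    exfalso
    refine cast_sum_ne_zero (k := k) (a := j/2) (b := (j'+1)/2) (by omega) (by omega) ?_
    rw [← h]; ring
  · rw [if_neg hp, if_pos hp'] at h
    exfalso
    refine cast_sum_ne_zero (k := k) (a := j'/2) (b := (j+1)/2) (by omega) (by omega) ?_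
    rw [h]; ring
  · rw [if_neg hp, if_neg hp'] at h
    have := cast_inj_of_lt (k := k) (by omega) (by omega) h
    omega

lemma dlt_add_succ (k j : ℕ) : dlt k j + dlt k (j+1) = if j % 2 = 0 then 1 else 0 := by
  unfold dlt
  by_cases hp : j % 2 = 0
  · rw [if_pos hp, if_neg (by omega), if_pos hp,
      show (j+1+1)/2 = j/2 + 1 from by omega, Nat.cast_add, Nat.cast_one]
    ring
  · rw [if_neg hp, if_pos (by omega), if_neg hp]
    ring

def zig (k i j : ℕ) : ZMod k := (i : ZMod k) + dlt k j

lemma zig_inj {i j j' : ℕ} (hj : j < k) (hj' : j' < k) (h : zig k i j = zig k i j') : j = j' :=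
  dlt_inj hj hj' (by rw [zig, zig] at h; exact add_left_cancel h)

lemma zig_add_succ (k i j : ℕ) :
    zig k i j + zig k i (j+1) = 2*(i : ZMod k) + (if j % 2 = 0 then 1 else 0) := by
  rw [zig, zig, ← dlt_add_succ k j]; ring

section Construction

variable {n k : ℕ} (S : Set (Fin n)) (em : ZMod k → Fin n)
  (hem : Function.Injective em) (hrange : Set.range em = S)

/-- the `i`-th zigzag path tree inside `S` -/
def inTree (hk : 2 ≤ k) (i : ℕ) : (⊤ : SimpleGraph (Fin n)).Subgraph where
  verts := S
  Adj a b := ∃ j : ℕ, j + 1 < k ∧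
    ((a = em (zig k i j) ∧ b = em (zig k i (j+1))) ∨ (b = em (zig k i j) ∧ a = em (zig k i (j+1))))
  adj_sub := by
    rintro a b ⟨j, hj, (⟨rfl, rfl⟩ | ⟨rfl, rfl⟩)⟩ <;>
    · simp only [top_adj, ne_eq]
      intro hh
      have := zig_inj (k := k) (i := i) (by omega) (by omega) (hem hh)
      omega
  edge_vert := by
    rintro a b ⟨j, hj, (⟨rfl, _⟩ | ⟨_, rfl⟩)⟩ <;>
    · rw [← hrange]; exact Set.mem_range_self _
  symm := by
    constructor
    rintro a b ⟨j, hj, hor⟩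
    exact ⟨j, hj, hor.symm⟩

/-- the equivalence between `ZMod k` and `S` induced by `em` -/
noncomputable def emEquiv : ZMod k ≃ ↥S :=
  Equiv.ofBijective (fun z => ⟨em z, hrange ▸ Set.mem_range_self z⟩)
    ⟨fun a b hab => hem (congrArg Subtype.val hab), by
      rintro ⟨a, ha⟩
      rw [← hrange] at ha
      obtain ⟨z, hz⟩ := ha
      exact ⟨z, Subtype.ext hz⟩⟩

lemma inTree_verts (hk : 2 ≤ k) (i : ℕ) : (inTree S em hem hrange hk i).verts = S := rfl

include hrange in
lemma mem_S_em (x : ZMod k) : em x ∈ S := hrange ▸ Set.mem_range_self _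

include hrange in
lemma mem_S_zig (i j : ℕ) : em (zig k i j) ∈ S := hrange ▸ Set.mem_range_self _

lemma inTree_isTree (hk : 2 ≤ k) (i : ℕ) : ((inTree S em hem hrange hk i).coe).IsTree := by
  haveI : NeZero k := ⟨by omega⟩
  set T := inTree S em hem hrange hk i with hT
  have zfbij : Function.Bijective (fun j : Fin k => zig k i j.val) := by
    refine (Nat.bijective_iff_injective_and_card _).mpr ⟨?_, by
      simp [Nat.card_eq_fintype_card, ZMod.card]⟩
    intro a b hab
    exact Fin.ext (zig_inj a.isLt b.isLt hab)
  set zE : Fin k ≃ ZMod k := Equiv.ofBijective _ zfbij with hzE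
  set eE : ZMod k ≃ ↥S := emEquiv S em hem hrange with heE
  set h : ↥(T.verts) → ℕ := fun a => (zE.symm (eE.symm ⟨a.1, a.2⟩)).val with hh
  have hidx : ∀ (a : ↥(T.verts)) (j : ℕ) (hj : j < k), a.1 = em (zig k i j) → h a = j := by
    intro a j hj haj
    have h1 : (⟨a.1, a.2⟩ : ↥S) = eE (zig k i j) := Subtype.ext haj
    have h2 : zig k i j = zE ⟨j, hj⟩ := rfl
    rw [hh]
    simp only [h1, Equiv.symm_apply_apply, h2]
  have hsurj : ∀ a : ↥(T.verts), ∃ j : ℕ, j < k ∧ a.1 = em (zig k i j) := by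
    intro a
    obtain ⟨z, hz⟩ : a.1 ∈ Set.range em := hrange ▸ a.2
    obtain ⟨j, hj⟩ := zE.surjective z
    exact ⟨j.val, j.isLt, by rw [← hz, ← hj]; rfl⟩
  have hinj : ∀ a b : ↥(T.verts), h a = h b → a = b := by
    intro a b hab
    obtain ⟨j, hj, haj⟩ := hsurj a
    obtain ⟨j', hj', hbj⟩ := hsurj b
    rw [hidx a j hj haj, hidx b j' hj' hbj] at hab
    subst hab
    exact Subtype.ext (by rw [haj, hbj])
  have hadj_idx : ∀ (a b : ↥(T.verts)), T.coe.Adj a b →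
      ∃ j : ℕ, j + 1 < k ∧ ((h a = j ∧ h b = j + 1) ∨ (h b = j ∧ h a = j + 1)) := by
    intro a b hab
    rw [SimpleGraph.Subgraph.coe_adj] at hab
    obtain ⟨j, hj, hor⟩ := hab
    rcases hor with ⟨ha, hb⟩ | ⟨hb, ha⟩
    · exact ⟨j, hj, Or.inl ⟨hidx a j (by omega) ha, hidx b (j+1) (by omega) hb⟩⟩
    · exact ⟨j, hj, Or.inr ⟨hidx b j (by omega) hb, hidx a (j+1) (by omega) ha⟩⟩
  constructor
  · -- connected
    rw [SimpleGraph.connected_iff]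
    have hreach : ∀ j : ℕ, j < k →
        T.coe.Reachable ⟨em (zig k i 0), mem_S_zig S em hrange i 0⟩
          ⟨em (zig k i j), mem_S_zig S em hrange i j⟩ := by
      intro j
      induction j with
      | zero => intro _; exact SimpleGraph.Reachable.refl _
      | succ m ih =>
        intro hm
        refine (ih (by omega)).trans ?_
        refine SimpleGraph.Adj.reachable ?_
        rw [SimpleGraph.Subgraph.coe_adj]
        exact ⟨m, by omega, Or.inl ⟨rfl, rfl⟩⟩
    refine ⟨?_, ⟨⟨em (zig k i 0), mem_S_zig S em hrange i 0⟩⟩⟩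
    · intro a b
      obtain ⟨j, hj, haj⟩ := hsurj a
      obtain ⟨j', hj', hbj⟩ := hsurj b
      have ha' : a = ⟨em (zig k i j), mem_S_zig S em hrange i j⟩ := Subtype.ext haj
      have hb' : b = ⟨em (zig k i j'), mem_S_zig S em hrange i j'⟩ := Subtype.ext hbj
      rw [ha', hb']
      exact (hreach j hj).symm.trans (hreach j' hj')
  · -- acyclic
    refine acyclic_of_height _ h ?_ ?_
    · intro v w hvw
      obtain ⟨j, hj, hor⟩ := hadj_idx v w hvw
      rcases hor with ⟨h1, h2⟩ | ⟨h1, h2⟩ <;> omega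
    · intro v w w' hvw hvw' hlt hlt'
      obtain ⟨j, hj, hor⟩ := hadj_idx v w hvw
      obtain ⟨j', hj', hor'⟩ := hadj_idx v w' hvw'
      apply hinj
      rcases hor with ⟨h1, h2⟩ | ⟨h1, h2⟩ <;> rcases hor' with ⟨h3, h4⟩ | ⟨h3, h4⟩ <;> omega


include hem hrange in
lemma inTree_adj_decomp (hk : 2 ≤ k) {i : ℕ} {a b : Fin n}
    (h : (inTree S em hem hrange hk i).Adj a b) :
    ∃ x y : ZMod k, a = em x ∧ b = em y ∧ ∃ c : ℕ, c ≤ 1 ∧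
      x + y = 2*(i : ZMod k) + (c : ZMod k) := by
  obtain ⟨j, hj, hor⟩ := h
  have hsum : zig k i j + zig k i (j+1)
      = 2*(i : ZMod k) + ((if j % 2 = 0 then 1 else 0 : ℕ) : ZMod k) := by
    rw [zig_add_succ]
    congr 1
    split <;> simp
  rcases hor with ⟨ha, hb⟩ | ⟨hb, ha⟩
  · exact ⟨_, _, ha, hb, (if j % 2 = 0 then 1 else 0), by split <;> omega, hsum⟩
  · exact ⟨_, _, ha, hb, (if j % 2 = 0 then 1 else 0), by split <;> omega,
      by rw [add_comm] at hsum; exact hsum⟩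

include hem hrange in
lemma inTree_edge_disj (hk : 2 ≤ k) {i i' : ℕ} (hi : i < k/2) (hi' : i' < k/2) (hii : i ≠ i') :
    (inTree S em hem hrange hk i).edgeSet ∩ (inTree S em hem hrange hk i').edgeSet = ∅ := by
  rw [Set.eq_empty_iff_forall_notMem]
  intro e
  induction e using Sym2.ind with
  | _ a b =>
  rintro ⟨h1, h2⟩
  rw [SimpleGraph.Subgraph.mem_edgeSet] at h1 h2
  obtain ⟨x, y, hax, hby, c, hc, hsum⟩ := inTree_adj_decomp S em hem hrange hk h1
  obtain ⟨x', y', hax', hby', c', hc', hsum'⟩ := inTree_adj_decomp S em hem hrange hk h2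
  have hx : x = x' := hem (hax ▸ hax')
  have hy : y = y' := hem (hby ▸ hby')
  rw [← hx, ← hy, hsum] at hsum'
  have hzz : ((2*i + c : ℕ) : ZMod k) = ((2*i' + c' : ℕ) : ZMod k) := by
    push_cast
    rw [hsum']
  have := cast_inj_of_lt (k := k) (by omega) (by omega) hzz
  omega

/-- the star tree centered at an outside vertex `v` -/
def starT (v : Fin n) (hv : v ∉ S) : (⊤ : SimpleGraph (Fin n)).Subgraph where
  verts := insert v S
  Adj a b := (a = v ∧ b ∈ S) ∨ (b = v ∧ a ∈ S)
  adj_sub := by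
    rintro a b (⟨rfl, hb⟩ | ⟨rfl, ha⟩) <;> simp only [top_adj, ne_eq]
    · exact fun e => hv (e ▸ hb)
    · exact fun e => hv (e.symm ▸ ha)
  edge_vert := by
    rintro a b (⟨rfl, hb⟩ | ⟨rfl, ha⟩)
    · exact Set.mem_insert _ _
    · exact Set.mem_insert_of_mem _ ha
  symm := by constructor; rintro a b (h | h) <;> [exact Or.inr h; exact Or.inl h]

lemma starT_verts (v : Fin n) (hv : v ∉ S) : (starT S v hv).verts = insert v S := rfl

lemma starT_isTree (v : Fin n) (hv : v ∉ S) : ((starT S v hv).coe).IsTree := by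
  set T := starT S v hv with hT
  have hvmem : v ∈ T.verts := Set.mem_insert _ _
  constructor
  · rw [SimpleGraph.connected_iff]
    refine ⟨?_, ⟨⟨v, hvmem⟩⟩⟩
    have hr : ∀ a : ↥(T.verts), T.coe.Reachable ⟨v, hvmem⟩ a := by
      intro a
      rcases a.2 with h | h
      · rw [show a = ⟨v, hvmem⟩ from Subtype.ext h]
      · exact SimpleGraph.Adj.reachable (by
          rw [SimpleGraph.Subgraph.coe_adj]; exact Or.inl ⟨rfl, h⟩)
    intro a b
    exact (hr a).symm.trans (hr b)
  · refine acyclic_of_height _ (fun a => if a.1 = v then 0 else 1) ?_ ?_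
    · intro a b hab
      rw [SimpleGraph.Subgraph.coe_adj] at hab
      show (if a.1 = v then 0 else 1) ≠ (if b.1 = v then 0 else 1)
      rcases hab with ⟨h1, h2⟩ | ⟨h1, h2⟩
      · rw [if_pos h1, if_neg (fun e => hv (by rw [← e]; exact h2))]
        omega
      · rw [if_neg (fun e => hv (by rw [← e]; exact h2)), if_pos h1]
        omega
    · intro a w w' h1 h2 hl1 hl2
      have key : ∀ b : ↥(T.verts), (if b.1 = v then 0 else 1) < (if a.1 = v then 0 else 1) →
          b.1 = v := by
        intro b hb
        have hb' : (if b.1 = v then 0 else 1 : ℕ) < (if a.1 = v then 0 else 1) := hb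
        by_cases hbv : b.1 = v
        · exact hbv
        · rw [if_neg hbv] at hb'
          have : (if a.1 = v then 0 else 1 : ℕ) ≤ 1 := by split <;> omega
          omega
      exact Subtype.ext ((key w hl1).trans (key w' hl2).symm)

lemma starT_vert_inter {v w : Fin n} (hv : v ∉ S) (hw : w ∉ S) (hvw : v ≠ w) :
    (starT S v hv).verts ∩ (starT S w hw).verts = S := by
  rw [starT_verts, starT_verts]
  ext x
  simp only [Set.mem_inter_iff, Set.mem_insert_iff]
  constructor
  · rintro ⟨h1 | h1, h2 | h2⟩ <;> first
      | exact absurd (h1.symm.trans h2) hvw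
      | assumption
  · exact fun h => ⟨Or.inr h, Or.inr h⟩

lemma starT_edge_disj {v w : Fin n} (hv : v ∉ S) (hw : w ∉ S) (hvw : v ≠ w) :
    (starT S v hv).edgeSet ∩ (starT S w hw).edgeSet = ∅ := by
  rw [Set.eq_empty_iff_forall_notMem]
  intro e
  induction e using Sym2.ind with
  | _ a b =>
  rintro ⟨h1, h2⟩
  rw [SimpleGraph.Subgraph.mem_edgeSet] at h1 h2
  rcases h1 with ⟨rfl, hb⟩ | ⟨rfl, ha⟩ <;> rcases h2 with ⟨h3, h4⟩ | ⟨h3, h4⟩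
  · exact hvw h3
  · exact hv h4
  · exact hv h4
  · exact hvw h3

include hem hrange in
lemma starT_inTree_edge_disj (hk : 2 ≤ k) {v : Fin n} (hv : v ∉ S) (i : ℕ) :
    (starT S v hv).edgeSet ∩ (inTree S em hem hrange hk i).edgeSet = ∅ := by
  rw [Set.eq_empty_iff_forall_notMem]
  intro e
  induction e using Sym2.ind with
  | _ a b =>
  rintro ⟨h1, h2⟩
  rw [SimpleGraph.Subgraph.mem_edgeSet] at h1 h2
  obtain ⟨x, y, hax, hby, -⟩ := inTree_adj_decomp S em hem hrange hk h2
  rcases h1 with ⟨rfl, -⟩ | ⟨rfl, -⟩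
  · exact hv (hax ▸ mem_S_em S em hrange x)
  · exact hv (hby ▸ mem_S_em S em hrange y)

include hrange in
lemma starT_inTree_vert_inter (hk : 2 ≤ k) {v : Fin n} (hv : v ∉ S) (i : ℕ) :
    (starT S v hv).verts ∩ (inTree S em hem hrange hk i).verts = S := by
  rw [starT_verts, inTree_verts]
  exact Set.inter_eq_self_of_subset_right (Set.subset_insert _ _)

end Construction

lemma exists_family {n k : ℕ} (hk : 2 ≤ k) (hkn : k ≤ n) (S : Set (Fin n)) (hS : S.ncard = k) :
    ∃ f : Fin ((n - k) + k/2) → (⊤ : SimpleGraph (Fin n)).Subgraph,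
      (∀ i, IsSteinerTree ⊤ S (f i)) ∧ ∀ i j, i ≠ j → InternallyDisjoint S (f i) (f j) := by
  haveI : NeZero k := ⟨by omega⟩
  have e1 : ↥S ≃ Fin k := Finite.equivFinOfCardEq (by rw [Nat.card_coe_set_eq, hS])
  have e2 : ZMod k ≃ Fin k := Finite.equivFinOfCardEq
    (by rw [Nat.card_eq_fintype_card, ZMod.card])
  set em : ZMod k → Fin n := fun z => (e1.symm (e2 z)).1 with hem_def
  have hem : Function.Injective em := fun a b hab =>
    e2.injective (e1.symm.injective (Subtype.ext hab))
  have hrange : Set.range em = S := by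
    ext x
    constructor
    · rintro ⟨z, rfl⟩
      exact (e1.symm (e2 z)).2
    · intro hx
      exact ⟨e2.symm (e1 ⟨x, hx⟩), by simp [hem_def]⟩
  have hcompl : Nat.card ↥(Sᶜ) = n - k := by
    have h2 := Set.ncard_add_ncard_compl S
    rw [Nat.card_eq_fintype_card, Fintype.card_fin] at h2
    rw [Nat.card_coe_set_eq]
    omega
  set cE : Fin (n - k) ≃ ↥(Sᶜ) := (Finite.equivFinOfCardEq hcompl).symm with hcE
  have hcEmem : ∀ a, (cE a).1 ∉ S := fun a => (cE a).2
  set g : Fin (n - k) ⊕ Fin (k/2) → (⊤ : SimpleGraph (Fin n)).Subgraph :=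
    Sum.elim (fun a => starT S (cE a).1 (hcEmem a)) (fun b => inTree S em hem hrange hk b.1)
    with hg
  have hgSteiner : ∀ x, IsSteinerTree ⊤ S (g x) := by
    rintro (a | b)
    · exact ⟨by rw [hg, Sum.elim_inl, starT_verts]; exact Set.subset_insert _ _,
        starT_isTree S _ (hcEmem a)⟩
    · exact ⟨by rw [hg, Sum.elim_inr, inTree_verts], inTree_isTree S em hem hrange hk _⟩
  have hgDisj : ∀ x y, x ≠ y → InternallyDisjoint S (g x) (g y) := by
    rintro (a | b) (a' | b') hxy <;> simp only [hg, Sum.elim_inl, Sum.elim_inr]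
    · have haa : (cE a).1 ≠ (cE a').1 := by
        intro h
        exact hxy (congrArg Sum.inl (cE.injective (Subtype.ext h)))
      exact ⟨starT_edge_disj S _ _ haa, starT_vert_inter S _ _ haa⟩
    · exact ⟨starT_inTree_edge_disj S em hem hrange hk (hcEmem a) b'.1,
        starT_inTree_vert_inter S em hem hrange hk (hcEmem a) b'.1⟩
    · refine ⟨?_, ?_⟩
      · rw [Set.inter_comm]
        exact starT_inTree_edge_disj S em hem hrange hk (hcEmem a') b.1
      · rw [Set.inter_comm]
        exact starT_inTree_vert_inter S em hem hrange hk (hcEmem a') b.1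
    · have hbb : b.1 ≠ b'.1 := by
        intro h
        exact hxy (congrArg Sum.inr (Fin.ext h))
      refine ⟨inTree_edge_disj S em hem hrange hk b.isLt b'.isLt hbb, ?_⟩
      rw [inTree_verts, inTree_verts, Set.inter_self]
  refine ⟨fun x => g (finSumFinEquiv.symm x), fun i => hgSteiner _, fun i j hij => ?_⟩
  exact hgDisj _ _ (fun h => hij (by simpa using congrArg finSumFinEquiv h))

lemma tree_edge_ncard {n : ℕ} (T : (⊤ : SimpleGraph (Fin n)).Subgraph)
    (ht : T.coe.IsTree) : T.edgeSet.ncard + 1 = T.verts.ncard := by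
  classical
  haveI : Fintype ↥T.verts := Fintype.ofFinite _
  haveI : Fintype ↥T.coe.edgeSet := Fintype.ofFinite _
  have h1 := ht.card_edgeFinset
  have h2 : T.edgeSet.ncard = T.coe.edgeSet.ncard := by
    rw [← SimpleGraph.Subgraph.image_coe_edgeSet_coe,
      Set.ncard_image_of_injective _ (Sym2.map.injective Subtype.val_injective)]
  have h3 : T.coe.edgeSet.ncard = T.coe.edgeFinset.card := Set.ncard_eq_toFinset_card' _
  have h4 : T.verts.ncard = Fintype.card ↥T.verts := by
    rw [← Nat.card_coe_set_eq, Nat.card_eq_fintype_card]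
  omega

lemma count_le {n k : ℕ} (hk : 2 ≤ k) (hkn : k ≤ n) (S : Set (Fin n)) (hS : S.ncard = k)
    {m : ℕ} (f : Fin m → (⊤ : SimpleGraph (Fin n)).Subgraph)
    (hst : ∀ i, IsSteinerTree ⊤ S (f i))
    (hd : ∀ i j, i ≠ j → InternallyDisjoint S (f i) (f j)) :
    m ≤ (n - k) + k/2 := by
  classical
  set A : Finset (Fin m) := Finset.univ.filter (fun i => (f i).verts = S) with hA
  have hmemA : ∀ i, i ∈ A ↔ (f i).verts = S := by
    intro i
    rw [hA, Finset.mem_filter]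
    simp
  -- each tree not in A has a private outside vertex
  have hwit : ∀ i : Fin m, i ∉ A → ∃ v, v ∈ (f i).verts ∧ v ∉ S := by
    intro i hi
    rw [hmemA] at hi
    rcases Set.exists_of_ssubset ((hst i).1.ssubset_of_ne (Ne.symm hi)) with ⟨v, hv1, hv2⟩
    exact ⟨v, hv1, hv2⟩
  have hn0 : 0 < n := by omega
  set w : Fin m → Fin n := fun i =>
    if h : i ∉ A then Classical.choose (hwit i h) else ⟨0, hn0⟩ with hw
  have hwspec : ∀ i ∉ A, w i ∈ (f i).verts ∧ w i ∉ S := by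
    intro i hi
    rw [hw]
    simp only [hi, dif_pos, not_false_iff]
    exact Classical.choose_spec (hwit i hi)
  have hcard1 : Aᶜ.card ≤ n - k := by
    have hsub : Aᶜ.card ≤ ((Set.toFinite Sᶜ).toFinset).card := by
      refine Finset.card_le_card_of_injOn w ?_ ?_
      · intro i hi
        rw [Finset.mem_coe, Set.Finite.mem_toFinset, Set.mem_compl_iff]
        exact (hwspec i (Finset.mem_compl.mp hi)).2
      · intro i hi j hj hij
        by_contra hne
        have hdisj := (hd i j hne).2
        have : w i ∈ (f i).verts ∩ (f j).verts := by
          refine ⟨(hwspec i (Finset.mem_compl.mp hi)).1, ?_⟩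
          rw [hij]
          exact (hwspec j (Finset.mem_compl.mp hj)).1
        rw [hdisj] at this
        exact (hwspec i (Finset.mem_compl.mp hi)).2 this
    have hc : Sᶜ.ncard = n - k := by
      have h2 := Set.ncard_add_ncard_compl S
      rw [Nat.card_eq_fintype_card, Fintype.card_fin] at h2
      omega
    rwa [← Set.ncard_eq_toFinset_card _ (Set.toFinite Sᶜ), hc] at hsub
  -- trees in A use k-1 edges each, all within S, pairwise disjoint
  set E : Fin m → Finset (Sym2 (Fin n)) := fun i => (Set.toFinite (f i).edgeSet).toFinset
    with hE
  have hEcard : ∀ i ∈ A, (E i).card = k - 1 := by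
    intro i hi
    have h1 := tree_edge_ncard (f i) (hst i).2
    rw [(hmemA i).mp hi, hS] at h1
    rw [hE, ← Set.ncard_eq_toFinset_card _ (Set.toFinite _)]
    omega
  have hUsub : ∀ i ∈ A, (E i) ⊆ (Set.toFinite
      {e : Sym2 (Fin n) | ¬ e.IsDiag ∧ ∀ x ∈ e, x ∈ S}).toFinset := by
    intro i hi e he
    rw [hE, Set.Finite.mem_toFinset] at he
    rw [Set.Finite.mem_toFinset]
    constructor
    · induction e using Sym2.ind with
      | _ a b =>
      intro hdiag
      rw [Sym2.mk_isDiag_iff] at hdiag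
      exact ((f i).adj_sub he).ne hdiag
    · intro x hx
      rw [← (hmemA i).mp hi]
      exact SimpleGraph.Subgraph.mem_verts_of_mem_edge he hx
  have hDcard : ((Set.toFinite
      {e : Sym2 (Fin n) | ¬ e.IsDiag ∧ ∀ x ∈ e, x ∈ S}).toFinset).card ≤ k * (k-1) / 2 := by
    haveI : Fintype ↥S := Fintype.ofFinite _
    have hSk : Fintype.card ↥S = k := by
      rw [← Nat.card_eq_fintype_card, Nat.card_coe_set_eq, hS]
    have hsurj : Set.SurjOn (fun e : {e : Sym2 ↥S // ¬ e.IsDiag} => Sym2.map Subtype.val e.1)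
        ↑(Finset.univ : Finset {e : Sym2 ↥S // ¬ e.IsDiag})
        ↑((Set.toFinite {e : Sym2 (Fin n) | ¬ e.IsDiag ∧ ∀ x ∈ e, x ∈ S}).toFinset) := by
      intro e he
      simp only [Finset.mem_coe, Set.Finite.mem_toFinset] at he
      induction e using Sym2.ind with
      | _ a b =>
      obtain ⟨hdiag, hmem⟩ := he
      have ha : a ∈ S := hmem a (Sym2.mem_mk_left a b)
      have hb : b ∈ S := hmem b (Sym2.mem_mk_right a b)
      refine ⟨⟨s(⟨a, ha⟩, ⟨b, hb⟩), ?_⟩, Finset.mem_coe.mpr (Finset.mem_univ _), rfl⟩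
      rw [Sym2.mk_isDiag_iff]
      intro hab
      exact hdiag (by rw [Sym2.mk_isDiag_iff]; exact congrArg Subtype.val hab)
    have := Finset.card_le_card_of_surjOn _ hsurj
    rw [Finset.card_univ, Sym2.card_subtype_not_diag, hSk, Nat.choose_two_right] at this
    exact this
  have hcard2 : A.card ≤ k / 2 := by
    have hdisjE : ∀ i ∈ A, ∀ j ∈ A, i ≠ j → Disjoint (E i) (E j) := by
      intro i _ j _ hij
      rw [Finset.disjoint_left]
      intro e hei hej
      rw [hE, Set.Finite.mem_toFinset] at hei hej
      have := (hd i j hij).1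
      have : e ∈ (f i).edgeSet ∩ (f j).edgeSet := ⟨hei, hej⟩
      rw [(hd i j hij).1] at this
      exact this
    have hbiU := Finset.card_biUnion hdisjE
    have hsum : ∑ i ∈ A, (E i).card = A.card * (k - 1) := by
      rw [Finset.sum_congr rfl hEcard, Finset.sum_const, smul_eq_mul]
    have hsub2 : A.biUnion E ⊆ (Set.toFinite
        {e : Sym2 (Fin n) | ¬ e.IsDiag ∧ ∀ x ∈ e, x ∈ S}).toFinset := by
      intro e he
      rw [Finset.mem_biUnion] at he
      obtain ⟨i, hi, hei⟩ := he
      exact hUsub i hi hei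
    have hkey : A.card * (k - 1) ≤ k * (k - 1) / 2 := by
      rw [← hsum, ← hbiU]
      exact le_trans (Finset.card_le_card hsub2) hDcard
    have hdiv := Nat.div_mul_le_self (k * (k - 1)) 2
    have h2 : A.card * (k - 1) * 2 ≤ k * (k - 1) :=
      le_trans (Nat.mul_le_mul_right 2 hkey) hdiv
    have h3 : (2 * A.card) * (k - 1) ≤ k * (k - 1) := by
      calc (2 * A.card) * (k - 1) = A.card * (k - 1) * 2 := by ring
      _ ≤ k * (k - 1) := h2
    have h4 : 2 * A.card ≤ k := Nat.le_of_mul_le_mul_right h3 (by omega)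
    omega
  have := Finset.card_add_card_compl A
  rw [Fintype.card_fin] at this
  omega

end KnAux

theorem stmt4 (n k : ℕ) (hk2 : 2 ≤ k) (hkn : k ≤ n) :
    genConn (⊤ : SimpleGraph (Fin n)) k = n - (k + 1) / 2 := by
  have hN : ∀ S : Set (Fin n), S.ncard = k →
      steinerConn (⊤ : SimpleGraph (Fin n)) S = (n - k) + k/2 := by
    intro S hS
    have hbdd : ∀ m ∈ {m | ∃ f : Fin m → (⊤ : SimpleGraph (Fin n)).Subgraph,
        (∀ i, IsSteinerTree ⊤ S (f i)) ∧ ∀ i j, i ≠ j → InternallyDisjoint S (f i) (f j)},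
        m ≤ (n - k) + k/2 := by
      rintro m ⟨f, hst, hd⟩
      exact KnAux.count_le hk2 hkn S hS f hst hd
    apply le_antisymm
    · apply csSup_le
      · exact ⟨0, Fin.elim0, fun i => i.elim0, fun i => i.elim0⟩
      · exact hbdd
    · obtain ⟨f, h1, h2⟩ := KnAux.exists_family hk2 hkn S hS
      exact le_csSup ⟨(n - k) + k/2, hbdd⟩ ⟨f, h1, h2⟩
  have hset : {m | ∃ S : Set (Fin n), S.ncard = k ∧
      steinerConn (⊤ : SimpleGraph (Fin n)) S = m} = {(n - k) + k/2} := by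
    ext m
    simp only [Set.mem_setOf_eq, Set.mem_singleton_iff]
    constructor
    · rintro ⟨S, hS, rfl⟩
      exact hN S hS
    · rintro rfl
      obtain ⟨F, -, hF⟩ := Finset.exists_subset_card_eq (s := (Finset.univ : Finset (Fin n))) (n := k)
        (by simp [hkn])
      exact ⟨↑F, by rw [Set.ncard_coe_finset, hF],
        hN _ (by rw [Set.ncard_coe_finset, hF])⟩
  unfold genConn
  rw [hset, csInf_singleton]
  omega
end

section
/- For every two integers n and k with 2 ≤ k ≤ n, the generalized k-edge-connectivity of the complete graph K_n satisfies λ_k(K_n) = n − ⌈k/2⌉. -/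
open SimpleGraph

variable {V : Type*}

namespace SteinerAux


variable {V : Type*} {G : SimpleGraph V}

/-- Walk built from a function with adjacent consecutive values. -/
def walkOfFn (G : SimpleGraph V) (v : ℕ → V) :
    (d : ℕ) → (h : ∀ i < d, G.Adj (v i) (v (i+1))) → G.Walk (v 0) (v d)
  | 0, _ => Walk.nil
  | (d+1), h =>
    (walkOfFn G v d (fun i hi => h i (Nat.lt_succ_of_lt hi))).concat (h d (Nat.lt_succ_self d))

lemma walkOfFn_length (v : ℕ → V) (d : ℕ) (h : ∀ i < d, G.Adj (v i) (v (i+1))) :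
    (walkOfFn G v d h).length = d := by
  induction d with
  | zero => rfl
  | succ d ih => simp [walkOfFn, Walk.length_concat, ih]

lemma walkOfFn_support (v : ℕ → V) (d : ℕ) (h : ∀ i < d, G.Adj (v i) (v (i+1))) :
    (walkOfFn G v d h).support = (List.range (d+1)).map v := by
  induction d with
  | zero => rfl
  | succ d ih =>
    rw [walkOfFn, Walk.support_concat, ih, List.range_succ (n := d + 1)]
    simp

lemma walkOfFn_edges (v : ℕ → V) (d : ℕ) (h : ∀ i < d, G.Adj (v i) (v (i+1))) :
    (walkOfFn G v d h).edges = (List.range d).map (fun i => s(v i, v (i+1))) := by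
  induction d with
  | zero => rfl
  | succ d ih =>
    rw [walkOfFn, Walk.edges_concat, ih, List.range_succ (n := d)]
    simp

lemma walkOfFn_getVert (v : ℕ → V) (d : ℕ) (h : ∀ i < d, G.Adj (v i) (v (i+1))) (i : ℕ) :
    (walkOfFn G v d h).getVert i = v (min i d) := by
  induction d with
  | zero =>
    rw [Walk.getVert_of_length_le _ (by simp [walkOfFn])]
    simp [walkOfFn]
  | succ d ih =>
    rw [walkOfFn, Walk.concat_eq_append, Walk.getVert_append, walkOfFn_length]
    by_cases hi : i < d
    · rw [if_pos hi, ih]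
      congr 1
      omega
    · rw [if_neg hi]
      rcases Nat.lt_or_ge i (d+1) with h1 | h1
      · have : i = d := by omega
        subst this
        simp
      · have h2 : i - d = (i - d - 1) + 1 := by omega
        rw [h2, Walk.getVert_cons_succ, Walk.getVert_of_length_le _ (by simp)]
        congr 1
        omega

lemma walkOfFn_isPath (v : ℕ → V) (d : ℕ) (h : ∀ i < d, G.Adj (v i) (v (i+1)))
    (hinj : ∀ i ≤ d, ∀ j ≤ d, v i = v j → i = j) : (walkOfFn G v d h).IsPath := by
  rw [Walk.isPath_def, walkOfFn_support]
  apply List.Nodup.map_on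
  · intro i hi j hj hij
    simp only [List.mem_range] at hi hj
    exact hinj i (by omega) j (by omega) hij
  · exact List.nodup_range

/-- getVert is injective on paths. -/
lemma IsPath.getVert_inj {u w : V} {p : G.Walk u w} (hp : p.IsPath) :
    ∀ {i j}, i ≤ p.length → j ≤ p.length → p.getVert i = p.getVert j → i = j := by
  induction p with
  | nil => intro i j hi hj _; simp at hi hj; omega
  | @cons u x w hux q ih =>
    intro i j hi hj hij
    rw [Walk.cons_isPath_iff] at hp
    match i, j with
    | 0, 0 => rfl
    | 0, (j+1) =>
      exfalso
      rw [Walk.getVert_zero, Walk.getVert_cons_succ] at hij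
      exact hp.2 (Walk.mem_support_iff_exists_getVert.mpr ⟨j, hij.symm, by simpa using hj⟩)
    | (i+1), 0 =>
      exfalso
      rw [Walk.getVert_zero, Walk.getVert_cons_succ] at hij
      exact hp.2 (Walk.mem_support_iff_exists_getVert.mpr ⟨i, hij, by simpa using hi⟩)
    | (i+1), (j+1) =>
      rw [Walk.getVert_cons_succ, Walk.getVert_cons_succ] at hij
      have := ih hp.1 (by simpa using hi) (by simpa using hj) hij
      omega

section Height

variable {W : Type*} {H : SimpleGraph W} {h : W → ℕ}

lemma no_max_cycle (hadj : ∀ ⦃x y⦄, H.Adj x y → h x ≠ h y)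
    (hsub : ∀ ⦃x y z⦄, H.Adj x y → H.Adj x z → h y < h x → h z < h x → y = z)
    (x : W) (c : H.Walk x x) (hc : c.IsCycle) (hmax : ∀ y ∈ c.support, h y ≤ h x) : False := by
  cases c with
  | nil => exact Walk.IsCycle.not_of_nil hc
  | @cons _ y _ hxy q =>
    have h3 : 3 ≤ (Walk.cons hxy q).length := hc.three_le_length
    have hq : q.IsPath := ((Walk.cons_isCycle_iff q hxy).mp hc).1
    have hL : 2 ≤ q.length := by simp [Walk.length_cons] at h3; omega
    set b := q.getVert (q.length - 1) with hbdef
    have hbx : H.Adj b x := by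
      have := q.adj_getVert_succ (i := q.length - 1) (by omega)
      rwa [(by omega : q.length - 1 + 1 = q.length), q.getVert_length] at this
    have hab : y ≠ b := by
      intro hyb
      have := IsPath.getVert_inj hq (i := 0) (j := q.length - 1) (by omega) (by omega)
        (by rw [Walk.getVert_zero, ← hbdef, ← hyb])
      omega
    have hy_mem : y ∈ (Walk.cons hxy q).support := by
      rw [Walk.support_cons]
      exact List.mem_cons_of_mem _ q.start_mem_support
    have hb_mem : b ∈ (Walk.cons hxy q).support := by
      rw [Walk.support_cons]
      exact List.mem_cons_of_mem _
        (Walk.mem_support_iff_exists_getVert.mpr ⟨q.length - 1, rfl, by omega⟩)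
    have h1 : h y < h x := lt_of_le_of_ne (hmax y hy_mem) (fun hyx => hadj hxy hyx.symm)
    have h2 : h b < h x := lt_of_le_of_ne (hmax b hb_mem) (hadj hbx)
    exact hab (hsub hxy hbx.symm h1 h2)

/-- A graph in which every vertex has at most one "smaller" neighbour (w.r.t. an
adjacency-distinguishing height function) is acyclic. -/
lemma isAcyclic_of_height (hadj : ∀ ⦃x y⦄, H.Adj x y → h x ≠ h y)
    (hsub : ∀ ⦃x y z⦄, H.Adj x y → H.Adj x z → h y < h x → h z < h x → y = z) :
    H.IsAcyclic := by
  classical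
  intro v c hc
  have hvmem : v ∈ c.support := c.start_mem_support
  obtain ⟨x, hxmem, hxmax⟩ := (c.support.toFinset).exists_max_image h ⟨v, by simpa using hvmem⟩
  rw [List.mem_toFinset] at hxmem
  have hmax : ∀ y ∈ c.support, h y ≤ h x := fun y hy => hxmax y (by simpa using hy)
  have hc' : (c.rotate x hxmem).IsCycle := hc.rotate hxmem
  refine no_max_cycle hadj hsub x (c.rotate x hxmem) hc' ?_
  intro y hy
  rw [Walk.support_eq_cons] at hy
  rcases List.mem_cons.mp hy with rfl | hy'
  · exact le_refl _
  · exact hmax y (List.mem_of_mem_tail (((c.support_rotate x hxmem).mem_iff).mp hy'))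

end Height

section PathTree
variable {V : Type*}

open Classical in
/-- index function: left inverse of `v` on `[0,d]`. -/
noncomputable def idxOf (v : ℕ → V) (d : ℕ) (x : V) : ℕ :=
  if h : ∃ i, i ≤ d ∧ v i = x then h.choose else 0

lemma idxOf_eq (v : ℕ → V) (d : ℕ) (hinj : ∀ i ≤ d, ∀ j ≤ d, v i = v j → i = j)
    {i : ℕ} (hi : i ≤ d) : idxOf v d (v i) = i := by
  rw [idxOf, dif_pos ⟨i, hi, rfl⟩]
  have h : ∃ j, j ≤ d ∧ v j = v i := ⟨i, hi, rfl⟩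
  exact hinj _ h.choose_spec.1 _ hi h.choose_spec.2

lemma walkOfFn_toSubgraph_adj (v : ℕ → V) (d : ℕ)
    (h : ∀ i < d, (⊤ : SimpleGraph V).Adj (v i) (v (i+1))) {a b : V}
    (hab : (walkOfFn ⊤ v d h).toSubgraph.Adj a b) :
    ∃ i, i < d ∧ ((a = v i ∧ b = v (i+1)) ∨ (a = v (i+1) ∧ b = v i)) := by
  rw [Walk.toSubgraph_adj_iff] at hab
  obtain ⟨i, heq, hlt⟩ := hab
  rw [walkOfFn_length] at hlt
  rw [walkOfFn_getVert, walkOfFn_getVert, min_eq_left (by omega), min_eq_left (by omega)] at heq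
  rw [Sym2.eq_iff] at heq
  exact ⟨i, hlt, by tauto⟩

lemma walkOfFn_isTree (v : ℕ → V) (d : ℕ)
    (h : ∀ i < d, (⊤ : SimpleGraph V).Adj (v i) (v (i+1)))
    (hinj : ∀ i ≤ d, ∀ j ≤ d, v i = v j → i = j) :
    (walkOfFn ⊤ v d h).toSubgraph.coe.IsTree := by
  constructor
  · exact (Walk.toSubgraph_connected _).coe
  · apply isAcyclic_of_height (H := (walkOfFn ⊤ v d h).toSubgraph.coe)
      (h := fun x => idxOf v d (x : V))
    · intro x y hxy
      obtain ⟨i, hi, hc⟩ := walkOfFn_toSubgraph_adj v d h hxy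
      rcases hc with ⟨hx, hy⟩ | ⟨hx, hy⟩ <;>
        rw [hx, hy, idxOf_eq v d hinj (by omega), idxOf_eq v d hinj (by omega)] <;> omega
    · intro x y z h1 h2 hy hz
      obtain ⟨i, hi, hc1⟩ := walkOfFn_toSubgraph_adj v d h h1
      obtain ⟨j, hj, hc2⟩ := walkOfFn_toSubgraph_adj v d h h2
      have hxvi : (x : V) = v (i+1) ∧ (y : V) = v i := by
        rcases hc1 with ⟨hx, hyy⟩ | hc
        · exfalso
          rw [hx, hyy, idxOf_eq v d hinj (by omega), idxOf_eq v d hinj (by omega)] at hy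
          omega
        · exact hc
      have hxvj : (x : V) = v (j+1) ∧ (z : V) = v j := by
        rcases hc2 with ⟨hx, hzz⟩ | hc
        · exfalso
          rw [hx, hzz, idxOf_eq v d hinj (by omega), idxOf_eq v d hinj (by omega)] at hz
          omega
        · exact hc
      have hij : i = j := by
        have := hinj (i+1) (by omega) (j+1) (by omega) (hxvi.1 ▸ hxvj.1 ▸ rfl)
        omega
      exact Subtype.ext (by rw [hxvi.2, hxvj.2, hij])

end PathTree

section Star
variable {V : Type*}

/-- The star subgraph with centre `w` and leaves `S`. -/
def starSub (S : Set V) (w : V) (hw : w ∉ S) : (⊤ : SimpleGraph V).Subgraph where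
  verts := insert w S
  Adj a b := (a = w ∧ b ∈ S) ∨ (b = w ∧ a ∈ S)
  adj_sub := by
    rintro a b (⟨rfl, hb⟩ | ⟨rfl, ha⟩) <;> simp only [top_adj] <;> rintro rfl <;> exact hw ‹_›
  edge_vert := by
    rintro a b (⟨rfl, hb⟩ | ⟨rfl, ha⟩)
    · exact Set.mem_insert _ _
    · exact Set.mem_insert_of_mem _ ha
  symm := by
    constructor
    rintro a b (⟨rfl, hb⟩ | ⟨rfl, ha⟩)
    · exact Or.inr ⟨rfl, hb⟩
    · exact Or.inl ⟨rfl, ha⟩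

lemma starSub_adj {S : Set V} {w : V} {hw : w ∉ S} {a b : V} :
    (starSub S w hw).Adj a b ↔ (a = w ∧ b ∈ S) ∨ (b = w ∧ a ∈ S) := Iff.rfl

lemma starSub_isTree (S : Set V) (w : V) (hw : w ∉ S) : (starSub S w hw).coe.IsTree := by
  classical
  have hcen : ∀ a : ↥(starSub S w hw).verts,
      (starSub S w hw).coe.Reachable a ⟨w, Set.mem_insert _ _⟩ := by
    intro a
    rcases Set.mem_insert_iff.mp a.2 with h | h
    · rw [show a = ⟨w, Set.mem_insert _ _⟩ from Subtype.ext h]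
    · exact (Adj.reachable (Or.inr ⟨rfl, h⟩ : (starSub S w hw).Adj (a : V) w))
  haveI : Nonempty ↥(starSub S w hw).verts := ⟨⟨w, Set.mem_insert _ _⟩⟩
  constructor
  · exact ⟨fun a b => (hcen a).trans (hcen b).symm⟩
  · apply isAcyclic_of_height (H := (starSub S w hw).coe)
      (h := fun x => if (x : V) = w then 0 else 1)
    · rintro x y (⟨hx, hy⟩ | ⟨hy, hx⟩)
      · rw [if_pos hx, if_neg (fun h => hw (by rw [← h]; exact hy))]
        omega
      · rw [if_pos hy, if_neg (fun h => hw (by rw [← h]; exact hx))]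
        omega
    · intro x y z h1 h2 hy hz
      have hyw : (y : V) = w := by
        by_contra hne
        rw [if_neg hne] at hy
        split at hy <;> omega
      have hzw : (z : V) = w := by
        by_contra hne
        rw [if_neg hne] at hz
        split at hz <;> omega
      exact Subtype.ext (hyw.trans hzw.symm)

end Star

section TreeCount
variable {W : Type*} [Finite W] {G : SimpleGraph W}

lemma tree_edges_within (hG : G.IsTree) (Y : Set W) (hY : Y.Nonempty) (r : W) (hr : r ∉ Y) :
    {e ∈ G.edgeSet | ∀ v ∈ e, v ∈ Y}.ncard + 1 ≤ Y.ncard := by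
  classical
  have hpth : ∀ v, ((hG.existsUnique_path v r).choose).IsPath := fun v =>
    (hG.existsUnique_path v r).choose_spec.1
  have huniq : ∀ (v : W) (q : G.Walk v r), q.IsPath → q = (hG.existsUnique_path v r).choose :=
    fun v q hq => (hG.existsUnique_path v r).choose_spec.2 q hq
  let pth : (v : W) → G.Walk v r := fun v => (hG.existsUnique_path v r).choose
  let dep : W → ℕ := fun v => (pth v).length
  let par : W → W := fun v => (pth v).getVert 1
  have K1 : ∀ v, v ≠ r → G.Adj v (par v) ∧ dep (par v) + 1 = dep v := by
    intro v hv
    obtain ⟨w, hadj, q, hq⟩ := Walk.exists_eq_cons_of_ne hv (pth v)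
    have hqpath : q.IsPath := by
      have h' := hpth v
      rw [show (hG.existsUnique_path v r).choose = pth v from rfl, hq,
        Walk.cons_isPath_iff] at h'
      exact h'.1
    have hqw : q = pth w := huniq w q hqpath
    have hparw : par v = w := by
      show (pth v).getVert 1 = w
      rw [hq, Walk.getVert_cons_succ, Walk.getVert_zero]
    constructor
    · rw [hparw]; exact hadj
    · show dep (par v) + 1 = (pth v).length
      rw [hparw, hq, Walk.length_cons]
      show (pth w).length + 1 = _
      rw [← hqw]
  have K2 : ∀ ⦃x y : W⦄, G.Adj x y → y = par x ∨ x = par y := by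
    intro x y hadj
    by_cases hy : y ∈ (pth x).support
    · left
      have hdrop : ((pth x).dropUntil y hy).IsPath := (hpth x).dropUntil hy
      have hxns : x ∉ ((pth x).dropUntil y hy).support := by
        intro hxs
        have hnd : (pth x).support.Nodup := (hpth x).2
        rw [← Walk.take_spec (pth x) hy, Walk.support_append, List.nodup_append] at hnd
        rcases List.mem_cons.mp (Walk.support_eq_cons _ ▸ hxs) with h | h
        · exact hadj.ne h
        · exact hnd.2.2 _ ((pth x).takeUntil y hy).start_mem_support _ h rfl
      have heq : Walk.cons hadj ((pth x).dropUntil y hy) = pth x :=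
        huniq x _ (hdrop.cons hxns)
      show y = (pth x).getVert 1
      rw [← heq, Walk.getVert_cons_succ, Walk.getVert_zero]
    · right
      have heq : Walk.cons hadj.symm (pth x) = pth y := huniq y _ ((hpth x).cons hy)
      show x = (pth y).getVert 1
      rw [← heq, Walk.getVert_cons_succ, Walk.getVert_zero]
  obtain ⟨x0, hx0Y, hx0min⟩ := Set.exists_min_image Y dep Y.toFinite hY
  have hx0r : x0 ≠ r := fun h => hr (h ▸ hx0Y)
  have hparx0 : par x0 ∉ Y := by
    intro hmem
    have h1 := (K1 x0 hx0r).2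
    have := hx0min _ hmem
    omega
  have K4 : {e ∈ G.edgeSet | ∀ v ∈ e, v ∈ Y} ⊆ (fun v => s(v, par v)) '' (Y \ {x0}) := by
    intro e he
    induction e with
    | _ a b =>
      obtain ⟨hadj, hmem⟩ := he
      rw [mem_edgeSet] at hadj
      have ha : a ∈ Y := hmem a (Sym2.mem_mk_left a b)
      have hb : b ∈ Y := hmem b (Sym2.mem_mk_right a b)
      rcases K2 hadj with hpa | hpb
      · refine ⟨a, ⟨ha, ?_⟩, by show s(a, par a) = s(a, b); rw [hpa]⟩
        rintro rfl
        exact hparx0 (hpa ▸ hb)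
      · refine ⟨b, ⟨hb, ?_⟩, by show s(b, par b) = s(a, b); rw [hpb]; exact Sym2.eq_swap⟩
        rintro rfl
        exact hparx0 (hpb ▸ ha)
  have h1 : {e ∈ G.edgeSet | ∀ v ∈ e, v ∈ Y}.ncard ≤ (Y \ {x0}).ncard := by
    calc {e ∈ G.edgeSet | ∀ v ∈ e, v ∈ Y}.ncard
        ≤ ((fun v => s(v, par v)) '' (Y \ {x0})).ncard :=
          Set.ncard_le_ncard K4 ((Y \ {x0}).toFinite.image _)
      _ ≤ (Y \ {x0}).ncard := Set.ncard_image_le (Y \ {x0}).toFinite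
  rw [Set.ncard_diff_singleton_of_mem hx0Y] at h1
  have h2 : 0 < Y.ncard := (Set.ncard_pos Y.toFinite).mpr hY
  omega

end TreeCount



lemma endpoints_mem {G : SimpleGraph V} {T : G.Subgraph} {e : Sym2 V}
    (he : e ∈ T.edgeSet) : ∀ v ∈ e, v ∈ T.verts := by
  induction e with
  | _ a b =>
    rw [Subgraph.mem_edgeSet] at he
    intro v hv
    rcases Sym2.mem_iff.mp hv with rfl | rfl
    · exact he.fst_mem
    · exact he.snd_mem

lemma sum_ncard_le {ι : Type*} [Fintype ι] {α : Type*} [Fintype α] (g : ι → Set α)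
    (hdisj : ∀ i j, i ≠ j → g i ∩ g j = ∅) (A : Set α) :
    ∑ i, (g i ∩ A).ncard ≤ A.ncard := by
  classical
  have hd : ∀ i ∈ Finset.univ, ∀ j ∈ Finset.univ, i ≠ j →
      Disjoint ((g i ∩ A).toFinset) ((g j ∩ A).toFinset) := by
    intro i _ j _ hij
    rw [Finset.disjoint_left]
    intro e hei hej
    rw [Set.mem_toFinset] at hei hej
    have : e ∈ g i ∩ g j := ⟨hei.1, hej.1⟩
    rw [hdisj i j hij] at this
    exact this
  calc ∑ i, (g i ∩ A).ncard = ∑ i, ((g i ∩ A).toFinset).card := by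
        refine Finset.sum_congr rfl fun i _ => ?_
        exact Set.ncard_eq_toFinset_card' _
    _ = (Finset.univ.biUnion (fun i => (g i ∩ A).toFinset)).card :=
        (Finset.card_biUnion hd).symm
    _ ≤ A.toFinset.card := by
        apply Finset.card_le_card
        intro e he
        rw [Finset.mem_biUnion] at he
        obtain ⟨i, _, hei⟩ := he
        rw [Set.mem_toFinset] at hei ⊢
        exact hei.2
    _ = A.ncard := (Set.ncard_eq_toFinset_card' _).symm




lemma cap_inside [Fintype V] (S : Set V) :
    {e : Sym2 V | ¬e.IsDiag ∧ ∀ v ∈ e, v ∈ S}.ncard = S.ncard.choose 2 := by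
  classical
  haveI : Fintype ↥S := Fintype.ofFinite ↥S
  have himg : {e : Sym2 V | ¬e.IsDiag ∧ ∀ v ∈ e, v ∈ S} =
      Sym2.map (Subtype.val : ↥S → V) '' {z : Sym2 ↥S | ¬z.IsDiag} := by
    ext e
    constructor
    · intro he
      induction e with
      | _ a b =>
        have ha : a ∈ S := he.2 a (Sym2.mem_mk_left a b)
        have hb : b ∈ S := he.2 b (Sym2.mem_mk_right a b)
        refine ⟨s(⟨a, ha⟩, ⟨b, hb⟩), ?_, rfl⟩
        simp only [Set.mem_setOf_eq, Sym2.isDiag_iff_proj_eq] at he ⊢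
        exact fun hh => he.1 (congrArg Subtype.val hh)
    · rintro ⟨z, hz, rfl⟩
      refine ⟨fun hd => hz ((Sym2.isDiag_map Subtype.val_injective).mp hd), ?_⟩
      intro v hv
      rw [Sym2.mem_map] at hv
      obtain ⟨a, _, rfl⟩ := hv
      exact a.2
  rw [himg, Set.ncard_image_of_injective _ (Sym2.map.injective Subtype.val_injective)]
  have h1 : {z : Sym2 ↥S | ¬z.IsDiag}.ncard = Fintype.card {z : Sym2 ↥S // ¬z.IsDiag} := by
    rw [← Nat.card_coe_set_eq, Nat.card_eq_fintype_card]
    exact Fintype.card_congr (Equiv.subtypeEquivRight (fun z => Iff.rfl))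
  rw [h1, Sym2.card_subtype_not_diag]
  congr 1
  rw [← Nat.card_coe_set_eq, Nat.card_eq_fintype_card]

lemma cap_cross [Fintype V] (S : Set V) :
    {e : Sym2 V | ¬e.IsDiag ∧ (∃ v ∈ e, v ∈ S) ∧ (∃ v ∈ e, v ∉ S)}.ncard
      = S.ncard * (Fintype.card V - S.ncard) := by
  classical
  have himg : {e : Sym2 V | ¬e.IsDiag ∧ (∃ v ∈ e, v ∈ S) ∧ (∃ v ∈ e, v ∉ S)} =
      (fun p : ↥S × ↥(Sᶜ) => s((p.1 : V), (p.2 : V))) '' Set.univ := by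
    ext e
    constructor
    · intro he
      induction e with
      | _ a b =>
        obtain ⟨hd, ⟨v1, hv1, hv1S⟩, ⟨v2, hv2, hv2S⟩⟩ := he
        by_cases ha : a ∈ S
        · have hb : b ∉ S := by
            intro hb
            rcases Sym2.mem_iff.mp hv2 with rfl | rfl <;> exact hv2S ‹_›
          exact ⟨(⟨a, ha⟩, ⟨b, hb⟩), Set.mem_univ _, rfl⟩
        · have hb : b ∈ S := by
            rcases Sym2.mem_iff.mp hv1 with rfl | rfl
            · exact absurd hv1S ha
            · exact hv1S
          exact ⟨(⟨b, hb⟩, ⟨a, ha⟩), Set.mem_univ _, Sym2.eq_swap⟩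
    · rintro ⟨⟨a, b⟩, -, rfl⟩
      refine ⟨?_, ⟨a, Sym2.mem_mk_left _ _, a.2⟩, ⟨b, Sym2.mem_mk_right _ _, b.2⟩⟩
      rw [Sym2.isDiag_iff_proj_eq]
      simp only
      intro hab
      exact b.2 (by rw [← hab]; exact a.2)
  have hinj : Function.Injective (fun p : ↥S × ↥(Sᶜ) => s((p.1 : V), (p.2 : V))) := by
    rintro ⟨a, b⟩ ⟨a', b'⟩ h
    simp only [Sym2.eq_iff] at h
    rcases h with ⟨h1, h2⟩ | ⟨h1, h2⟩
    · exact Prod.ext (Subtype.ext h1) (Subtype.ext h2)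
    · exact absurd (h1 ▸ a.2) b'.2
  rw [himg, Set.ncard_image_of_injective _ hinj, Set.ncard_univ, Nat.card_prod,
    Nat.card_coe_set_eq, Nat.card_coe_set_eq]
  congr 1
  have := Set.ncard_add_ncard_compl S
  rw [Nat.card_eq_fintype_card] at this
  omega




lemma tree_ineq [Fintype V] {S : Set V} {k : ℕ} (hk : S.ncard = k) (hk2 : 2 ≤ k)
    {T : (⊤ : SimpleGraph V).Subgraph} (hsub : S ⊆ T.verts) (htree : T.coe.IsTree) :
    k * (k - 1) ≤ k * (T.edgeSet ∩ {e : Sym2 V | ¬e.IsDiag ∧ ∀ v ∈ e, v ∈ S}).ncard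
      + (k - 1) * (T.edgeSet ∩
          {e : Sym2 V | ¬e.IsDiag ∧ (∃ v ∈ e, v ∈ S) ∧ (∃ v ∈ e, v ∉ S)}).ncard := by
  classical
  set EI : Set (Sym2 V) := {e : Sym2 V | ¬e.IsDiag ∧ ∀ v ∈ e, v ∈ S} with hEI
  set EX : Set (Sym2 V) := {e : Sym2 V | ¬e.IsDiag ∧ (∃ v ∈ e, v ∈ S) ∧ (∃ v ∈ e, v ∉ S)}
    with hEX
  set EO : Set (Sym2 V) := {e : Sym2 V | ¬e.IsDiag ∧ ∀ v ∈ e, v ∉ S} with hEO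
  set a := (T.edgeSet ∩ EI).ncard with ha
  set b := (T.edgeSet ∩ EX).ncard with hb
  set c := (T.edgeSet ∩ EO).ncard with hc
  have F0 : ∀ e ∈ T.edgeSet, ¬ Sym2.IsDiag e := by
    intro e he
    have := T.edgeSet_subset he
    rwa [edgeSet_top] at this
  -- partition
  have hpart : T.edgeSet = (T.edgeSet ∩ EI) ∪ (T.edgeSet ∩ EX) ∪ (T.edgeSet ∩ EO) := by
    ext e
    constructor
    · intro he
      by_cases h1 : ∀ v ∈ e, v ∈ S
      · exact Or.inl (Or.inl ⟨he, F0 e he, h1⟩)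
      by_cases h2 : ∀ v ∈ e, v ∉ S
      · exact Or.inr ⟨he, F0 e he, h2⟩
      push_neg at h1 h2
      obtain ⟨v1, hv1, hv1'⟩ := h1
      obtain ⟨v2, hv2, hv2'⟩ := h2
      exact Or.inl (Or.inr ⟨he, F0 e he, ⟨v2, hv2, hv2'⟩, ⟨v1, hv1, hv1'⟩⟩)
    · rintro ((h | h) | h) <;> exact h.1
  have d12 : Disjoint (T.edgeSet ∩ EI) (T.edgeSet ∩ EX) := by
    rw [Set.disjoint_left]
    rintro e ⟨-, -, hall⟩ ⟨-, -, -, v, hv, hvn⟩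
    exact hvn (hall v hv)
  have d13 : Disjoint (T.edgeSet ∩ EI) (T.edgeSet ∩ EO) := by
    rw [Set.disjoint_left]
    rintro e ⟨he, -, hall⟩ ⟨-, -, hnone⟩
    induction e with
    | _ x y => exact hnone x (Sym2.mem_mk_left x y) (hall x (Sym2.mem_mk_left x y))
  have d23 : Disjoint (T.edgeSet ∩ EX) (T.edgeSet ∩ EO) := by
    rw [Set.disjoint_left]
    rintro e ⟨-, -, ⟨v, hv, hvS⟩, -⟩ ⟨-, -, hnone⟩
    exact hnone v hv hvS
  have hsum : T.edgeSet.ncard = a + b + c := by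
    rw [hpart, Set.ncard_union_eq (Disjoint.union_left d13 d23)
      ((Set.toFinite _).union (Set.toFinite _)) (Set.toFinite _),
      Set.ncard_union_eq d12 (Set.toFinite _) (Set.toFinite _)]
  -- tree edge count
  haveI : Fintype ↥T.verts := Fintype.ofFinite _
  haveI : Fintype ↥(T.coe.edgeSet) := Fintype.ofFinite _
  have F1 : T.edgeSet.ncard + 1 = T.verts.ncard := by
    have h := htree.card_edgeFinset
    have e1 : T.edgeSet.ncard = T.coe.edgeFinset.card := by
      rw [← Subgraph.image_coe_edgeSet_coe,
        Set.ncard_image_of_injective _ (Sym2.map.injective Subtype.val_injective),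
        edgeFinset_card, ← Nat.card_coe_set_eq, Nat.card_eq_fintype_card]
    have e2 : T.verts.ncard = Fintype.card ↥T.verts := by
      rw [← Nat.card_coe_set_eq, Nat.card_eq_fintype_card]
    rw [e1, e2, h]
  -- the set X of extra vertices
  have hX : (T.verts \ S).ncard = T.verts.ncard - k := by
    rw [Set.ncard_diff hsub (Set.toFinite _), hk]
  have hkverts : k ≤ T.verts.ncard := by
    rw [← hk]
    exact Set.ncard_le_ncard hsub (Set.toFinite _)
  by_cases hXe : T.verts \ S = ∅
  · -- no extra vertices: T.verts = S
    have hveq : T.verts = S := by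
      apply Set.Subset.antisymm _ hsub
      rw [← Set.diff_eq_empty]
      exact hXe
    have hb0 : b = 0 := by
      rw [hb, Set.ncard_eq_zero (Set.toFinite _)]
      rw [Set.eq_empty_iff_forall_notMem]
      rintro e ⟨he, -, -, v, hv, hvn⟩
      exact hvn (hveq ▸ endpoints_mem he v hv)
    have hc0 : c = 0 := by
      rw [hc, Set.ncard_eq_zero (Set.toFinite _)]
      rw [Set.eq_empty_iff_forall_notMem]
      rintro e ⟨he, -, hnone⟩
      induction e with
      | _ x y =>
        exact hnone x (Sym2.mem_mk_left x y) (hveq ▸ endpoints_mem he x (Sym2.mem_mk_left x y))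
    have hak : a = k - 1 := by
      have : T.verts.ncard = k := by rw [hveq, hk]
      omega
    rw [hak, hb0]
    simp
  · -- extra vertices exist
    have hXne : (T.verts \ S).Nonempty := Set.nonempty_iff_ne_empty.mpr hXe
    obtain ⟨r0, hr0⟩ : S.Nonempty := (Set.ncard_pos S.toFinite).mp (by omega)
    set Y : Set ↥T.verts := {v : ↥T.verts | (v : V) ∉ S} with hY
    have hYne : Y.Nonempty := by
      obtain ⟨x, hxv, hxs⟩ := hXne
      exact ⟨⟨x, hxv⟩, hxs⟩
    have bound := tree_edges_within htree Y hYne ⟨r0, hsub hr0⟩ (by simp [hY, hr0])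
    have htransfer : T.edgeSet ∩ EO =
        Sym2.map (Subtype.val : ↥T.verts → V) '' {e ∈ T.coe.edgeSet | ∀ v ∈ e, v ∈ Y} := by
      ext e
      constructor
      · rintro ⟨he, -, hnone⟩
        have he' : e ∈ Sym2.map (Subtype.val : ↥T.verts → V) '' T.coe.edgeSet := by
          rw [Subgraph.image_coe_edgeSet_coe]
          exact he
        obtain ⟨z, hz, rfl⟩ := he'
        refine ⟨z, ⟨hz, ?_⟩, rfl⟩
        intro v' hv'
        exact hnone (v' : V) (Sym2.mem_map.mpr ⟨v', hv', rfl⟩) 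
      · rintro ⟨z, ⟨hz, hzY⟩, rfl⟩
        have hmem : Sym2.map Subtype.val z ∈ T.edgeSet := by
          rw [← Subgraph.image_coe_edgeSet_coe]
          exact Set.mem_image_of_mem _ hz
        refine ⟨hmem, F0 _ hmem, ?_⟩
        intro v hv
        obtain ⟨v', hv', rfl⟩ := Sym2.mem_map.mp hv
        exact hzY v' hv'
    have hcY : c + 1 ≤ Y.ncard := by
      rw [hc, htransfer,
        Set.ncard_image_of_injective _ (Sym2.map.injective Subtype.val_injective)]
      exact bound
    have hYX : Subtype.val '' Y = T.verts \ S := by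
      ext x
      constructor
      · rintro ⟨v, hvY, rfl⟩
        exact ⟨v.2, hvY⟩
      · rintro ⟨hxv, hxs⟩
        exact ⟨⟨x, hxv⟩, hxs, rfl⟩
    have hYcard : Y.ncard = (T.verts \ S).ncard := by
      rw [← hYX, Set.ncard_image_of_injective _ Subtype.val_injective]
    have hab : k ≤ a + b := by omega
    calc k * (k - 1) = (k - 1) * k := Nat.mul_comm _ _
      _ ≤ (k - 1) * (a + b) := Nat.mul_le_mul_left _ hab
      _ = (k - 1) * a + (k - 1) * b := Nat.mul_add _ _ _
      _ ≤ k * a + (k - 1) * b := by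
          have : (k - 1) * a ≤ k * a := Nat.mul_le_mul_right _ (by omega)
          omega







lemma upper_bound [Fintype V] {S : Set V} {k : ℕ} (hk : S.ncard = k) (hk2 : 2 ≤ k)
    {m : ℕ} (f : Fin m → (⊤ : SimpleGraph V).Subgraph)
    (hst : ∀ i, S ⊆ (f i).verts ∧ (f i).coe.IsTree)
    (hdisj : ∀ i j, i ≠ j → (f i).edgeSet ∩ (f j).edgeSet = ∅) :
    m ≤ Fintype.card V - (k + 1) / 2 := by
  classical
  set EI : Set (Sym2 V) := {e : Sym2 V | ¬e.IsDiag ∧ ∀ v ∈ e, v ∈ S} with hEI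
  set EX : Set (Sym2 V) := {e : Sym2 V | ¬e.IsDiag ∧ (∃ v ∈ e, v ∈ S) ∧ (∃ v ∈ e, v ∉ S)}
    with hEX
  have SUMA : ∑ i, ((f i).edgeSet ∩ EI).ncard ≤ EI.ncard :=
    sum_ncard_le (fun i => (f i).edgeSet) hdisj EI
  have SUMB : ∑ i, ((f i).edgeSet ∩ EX).ncard ≤ EX.ncard :=
    sum_ncard_le (fun i => (f i).edgeSet) hdisj EX
  have KEYS : ∀ i, k * (k - 1) ≤
      k * ((f i).edgeSet ∩ EI).ncard + (k - 1) * ((f i).edgeSet ∩ EX).ncard :=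
    fun i => tree_ineq hk hk2 (hst i).1 (hst i).2
  set n := Fintype.card V with hn
  have hkn : k ≤ n := by
    rw [← hk, hn]
    calc S.ncard ≤ (Set.univ : Set V).ncard :=
          Set.ncard_le_ncard (Set.subset_univ S) (Set.toFinite _)
      _ = Fintype.card V := by rw [Set.ncard_univ, Nat.card_eq_fintype_card]
  have H1 : m * (k * (k - 1)) ≤ k * (k.choose 2) + (k - 1) * (k * (n - k)) := by
    calc m * (k * (k - 1)) = ∑ _i : Fin m, k * (k - 1) := by
          rw [Finset.sum_const, Finset.card_univ, Fintype.card_fin, smul_eq_mul]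
      _ ≤ ∑ i, (k * ((f i).edgeSet ∩ EI).ncard + (k - 1) * ((f i).edgeSet ∩ EX).ncard) :=
          Finset.sum_le_sum (fun i _ => KEYS i)
      _ = k * (∑ i, ((f i).edgeSet ∩ EI).ncard) + (k - 1) * (∑ i, ((f i).edgeSet ∩ EX).ncard) := by
          rw [Finset.sum_add_distrib, Finset.mul_sum, Finset.mul_sum]
      _ ≤ k * (k.choose 2) + (k - 1) * (k * (n - k)) := by
          have h1 := cap_inside S
          have h2 := cap_cross S
          rw [hk] at h1 h2
          exact Nat.add_le_add (Nat.mul_le_mul_left _ (h1 ▸ SUMA)) (Nat.mul_le_mul_left _ (h2 ▸ SUMB))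
  have hch : 2 * (k.choose 2) = k * (k - 1) := by
    obtain ⟨t, ht⟩ := Nat.even_mul_succ_self (k - 1)
    have hkk : k * (k - 1) = t + t := by
      rw [← ht, (by omega : k - 1 + 1 = k), Nat.mul_comm]
    rw [Nat.choose_two_right, hkk]
    omega
  have H2 : (2 * m) * (k * (k - 1)) ≤ (k + 2 * (n - k)) * (k * (k - 1)) := by
    calc (2 * m) * (k * (k - 1)) = 2 * (m * (k * (k - 1))) := by ring
      _ ≤ 2 * (k * (k.choose 2) + (k - 1) * (k * (n - k))) := by omega
      _ = k * (2 * (k.choose 2)) + (2 * (n - k)) * ((k - 1) * k) := by ring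
      _ = (k + 2 * (n - k)) * (k * (k - 1)) := by rw [hch]; ring
  have hpos : 0 < k * (k - 1) := by
    have : 1 ≤ k - 1 := by omega
    exact Nat.mul_pos (by omega) (by omega)
  have H3 : 2 * m ≤ k + 2 * (n - k) := Nat.le_of_mul_le_mul_right H2 hpos
  omega



lemma starSub_verts {S : Set V} {w : V} {hw : w ∉ S} : (starSub S w hw).verts = insert w S := rfl

lemma starSub_edge {S : Set V} {w : V} {hw : w ∉ S} {e : Sym2 V}
    (he : e ∈ (starSub S w hw).edgeSet) : ∃ u ∈ S, e = s(w, u) := by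
  induction e with
  | _ a b =>
    rw [Subgraph.mem_edgeSet] at he
    rcases he with ⟨rfl, hb⟩ | ⟨rfl, ha⟩
    · exact ⟨b, hb, rfl⟩
    · exact ⟨a, ha, Sym2.eq_swap⟩


/-- zigzag offset sequence -/
def zeta (k i : ℕ) : ℕ := if i % 2 = 1 then (i+1)/2 else (k - i/2) % k

lemma zeta_norm {k : ℕ} (hk : 2 ≤ k) (i : ℕ) (hi : i ≤ k - 1) :
    zeta k i = if i % 2 = 1 then (i+1)/2 else (if i = 0 then 0 else k - i/2) := by
  unfold zeta
  split_ifs with h1 h2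
  · rfl
  · rw [h2]
    simp
  · exact Nat.mod_eq_of_lt (by omega)

lemma zeta_lt {k : ℕ} (hk : 2 ≤ k) (i : ℕ) (hi : i ≤ k - 1) : zeta k i < k := by
  rw [zeta_norm hk i hi]
  split_ifs <;> omega

lemma zeta_inj {k : ℕ} (hk : 2 ≤ k) {i i' : ℕ} (hi : i ≤ k - 1) (hi' : i' ≤ k - 1)
    (h : zeta k i = zeta k i') : i = i' := by
  rw [zeta_norm hk i hi, zeta_norm hk i' hi'] at h
  split_ifs at h <;> omega

lemma zeta_sum {k : ℕ} (hk : 2 ≤ k) (i : ℕ) (hi : i + 1 ≤ k - 1) :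
    (zeta k i + zeta k (i+1)) % k = if i % 2 = 0 then 1 else 0 := by
  rw [zeta_norm hk i (by omega), zeta_norm hk (i+1) (by omega)]
  by_cases hpar : i % 2 = 1
  · -- i odd, i+1 even ≥ 2
    rw [if_pos hpar, if_neg (by omega : ¬(i+1) % 2 = 1), if_neg (by omega : ¬i + 1 = 0),
      if_neg (by omega : ¬i % 2 = 0)]
    have : (i+1)/2 + (k - (i+1)/2) = k := by omega
    rw [this, Nat.mod_self]
  · rw [if_neg hpar, if_pos (by omega : (i+1) % 2 = 1), if_pos (by omega : i % 2 = 0)]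
    by_cases h0 : i = 0
    · rw [if_pos h0, h0]
      norm_num
      exact Nat.mod_eq_of_lt (by omega)
    · rw [if_neg h0]
      have : k - i/2 + (i+1+1)/2 = k + 1 := by omega
      rw [this, Nat.add_mod_left k 1]
      exact Nat.mod_eq_of_lt (by omega)

/-- vertex index sequence of the `j`-th zigzag path -/
def phiF (k j : ℕ) (hk : 0 < k) (i : ℕ) : Fin k := ⟨(j + zeta k i) % k, Nat.mod_lt _ hk⟩

lemma phiF_inj {k : ℕ} (hk2 : 2 ≤ k) (j : ℕ) {i i' : ℕ} (hi : i ≤ k - 1) (hi' : i' ≤ k - 1)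
    (h : phiF k j (by omega) i = phiF k j (by omega) i') : i = i' := by
  have hval : (j + zeta k i) % k = (j + zeta k i') % k := congrArg Fin.val h
  have hmodeq : Nat.ModEq k (zeta k i) (zeta k i') :=
    Nat.ModEq.add_left_cancel' j hval
  have := hmodeq.eq_of_lt_of_lt (zeta_lt hk2 i hi) (zeta_lt hk2 i' hi')
  exact zeta_inj hk2 hi hi' this

section Constr
variable [Fintype V] [LinearOrder V]




lemma construction {S : Set V} {k : ℕ} (hk : S.ncard = k) (hk2 : 2 ≤ k) :
    ∃ f : Fin (Fintype.card V - (k+1)/2) → (⊤ : SimpleGraph V).Subgraph,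
      (∀ i, S ⊆ (f i).verts ∧ (f i).coe.IsTree) ∧
      (∀ i j, i ≠ j → (f i).edgeSet ∩ (f j).edgeSet = ∅) := by
  classical
  have hk0 : 0 < k := by omega
  set n := Fintype.card V with hn
  have hkn : k ≤ n := by
    rw [← hk, hn]
    calc S.ncard ≤ (Set.univ : Set V).ncard :=
          Set.ncard_le_ncard (Set.subset_univ S) (Set.toFinite _)
      _ = Fintype.card V := by rw [Set.ncard_univ, Nat.card_eq_fintype_card]
  -- enumeration of S
  have hfin : S.Finite := S.toFinite
  have hcard : hfin.toFinset.card = k := by rw [← Set.ncard_eq_toFinset_card]; exact hk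
  set g0 := hfin.toFinset.orderIsoOfFin hcard with hg0
  set gg : Fin k → V := fun i => (g0 i : V) with hgg
  have gginj : Function.Injective gg := fun a b h => g0.injective (Subtype.ext h)
  have ggmem : ∀ i, gg i ∈ S := fun i => hfin.mem_toFinset.mp (g0 i).2
  have ggsurj : ∀ x ∈ S, ∃ i, gg i = x := by
    intro x hx
    refine ⟨g0.symm ⟨x, hfin.mem_toFinset.mpr hx⟩, ?_⟩
    rw [hgg]
    simp
  -- enumeration of the complement
  have hfinc : (Sᶜ).Finite := Set.toFinite _
  have hcardc : hfinc.toFinset.card = n - k := by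
    rw [← Set.ncard_eq_toFinset_card]
    have := Set.ncard_add_ncard_compl S
    rw [Nat.card_eq_fintype_card] at this
    omega
  set o0 := hfinc.toFinset.orderIsoOfFin hcardc with ho0
  set oo : Fin (n - k) → V := fun i => (o0 i : V) with hoo
  have ooinj : Function.Injective oo := fun a b h => o0.injective (Subtype.ext h)
  have oomem : ∀ i, oo i ∉ S := fun i => (Set.mem_compl_iff _ _).mp (hfinc.mem_toFinset.mp (o0 i).2)
  -- zigzag paths
  set vfun : ℕ → ℕ → V := fun j i => gg (phiF k j hk0 i) with hvfun
  have hvinj : ∀ j, ∀ i ≤ k-1, ∀ i' ≤ k-1, vfun j i = vfun j i' → i = i' := by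
    intro j i hi i' hi' h
    exact phiF_inj hk2 j hi hi' (gginj h)
  have hvadj : ∀ j, ∀ i < k-1, (⊤ : SimpleGraph V).Adj (vfun j i) (vfun j (i+1)) := by
    intro j i hi
    rw [top_adj]
    intro h
    have := hvinj j i (by omega) (i+1) (by omega) h
    omega
  set pT : ℕ → (⊤ : SimpleGraph V).Subgraph :=
    fun j => (walkOfFn ⊤ (vfun j) (k-1) (hvadj j)).toSubgraph with hpT
  have hpTverts : ∀ j, S ⊆ (pT j).verts := by
    intro j x hx
    rw [hpT]
    simp only
    rw [Walk.verts_toSubgraph]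
    obtain ⟨i0, rfl⟩ := ggsurj x hx
    -- φ is surjective since injective on Fin k
    have hinj2 : Function.Injective (fun i : Fin k => phiF k j hk0 (i : ℕ)) := by
      intro a b h
      exact Fin.ext (phiF_inj hk2 j (by omega) (by omega) h)
    obtain ⟨i, hi⟩ := (Finite.injective_iff_surjective.mp hinj2) i0
    show gg i0 ∈ {w | w ∈ (walkOfFn ⊤ (vfun j) (k-1) (hvadj j)).support}
    rw [Set.mem_setOf_eq, walkOfFn_support]
    rw [List.mem_map]
    refine ⟨(i : ℕ), ?_, ?_⟩
    · rw [List.mem_range]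
      omega
    · exact congrArg gg hi
  have hpTtree : ∀ j, (pT j).coe.IsTree := fun j =>
    walkOfFn_isTree (vfun j) (k-1) (hvadj j) (hvinj j)
  have hpTedge : ∀ j, ∀ e ∈ (pT j).edgeSet, ∃ i < k - 1, e = s(vfun j i, vfun j (i+1)) := by
    intro j e he
    rw [hpT] at he
    simp only at he
    rw [Walk.mem_edges_toSubgraph, walkOfFn_edges, List.mem_map] at he
    obtain ⟨i, hi, rfl⟩ := he
    exact ⟨i, List.mem_range.mp hi, rfl⟩
  have hsumval : ∀ j < k/2, ∀ i < k - 1,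
      ((phiF k j hk0 i : ℕ) + (phiF k j hk0 (i+1) : ℕ)) % k
        = 2*j + (if i % 2 = 0 then 1 else 0) := by
    intro j hj i hi
    show ((j + zeta k i) % k + (j + zeta k (i+1)) % k) % k = _
    have hεlt : (if i % 2 = 0 then 1 else 0) ≤ 1 := by split_ifs <;> omega
    have h2j : 2*j + (if i % 2 = 0 then 1 else 0) < k := by omega
    calc ((j + zeta k i) % k + (j + zeta k (i+1)) % k) % k
        = ((j + zeta k i) + (j + zeta k (i+1))) % k := (Nat.add_mod _ _ _).symm
      _ = (2*j + (zeta k i + zeta k (i+1))) % k := by ring_nf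
      _ = (2*j + (zeta k i + zeta k (i+1)) % k) % k := (Nat.add_mod_mod _ _ _).symm
      _ = (2*j + (if i % 2 = 0 then 1 else 0)) % k := by
          rw [zeta_sum hk2 i (by omega)]
      _ = 2*j + (if i % 2 = 0 then 1 else 0) := Nat.mod_eq_of_lt h2j
  have hEDGE : ∀ j < k/2, ∀ e ∈ (pT j).edgeSet, ∃ (x y : Fin k) (ε : ℕ), ε ≤ 1 ∧
      e = s(gg x, gg y) ∧ ((x : ℕ) + (y : ℕ)) % k = 2*j + ε := by
    intro j hj e he
    obtain ⟨i, hi, rfl⟩ := hpTedge j e he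
    exact ⟨phiF k j hk0 i, phiF k j hk0 (i+1), (if i % 2 = 0 then 1 else 0),
      (by split_ifs <;> omega), rfl, hsumval j hj i hi⟩
  -- the family
  have hsplit : n - (k+1)/2 = (n - k) + k/2 := by omega
  set f : Fin (n - (k+1)/2) → (⊤ : SimpleGraph V).Subgraph := fun i =>
    if h : (i : ℕ) < n - k then starSub S (oo ⟨i, h⟩) (oomem _) else pT ((i : ℕ) - (n - k))
    with hf
  have hfpT : ∀ (i : Fin (n - (k+1)/2)) (h : ¬ (i : ℕ) < n - k),
      f i = pT ((i : ℕ) - (n - k)) ∧ (i : ℕ) - (n - k) < k/2 := by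
    intro i h
    constructor
    · rw [hf]; simp only [dif_neg h]
    · have := i.isLt
      omega
  refine ⟨f, ?_, ?_⟩
  · intro i
    by_cases h : (i : ℕ) < n - k
    · have hfi : f i = starSub S (oo ⟨i, h⟩) (oomem _) := by
        rw [hf]; simp only [dif_pos h]
      rw [hfi]
      exact ⟨by rw [starSub_verts]; exact Set.subset_insert _ _, starSub_isTree _ _ _⟩
    · rw [(hfpT i h).1]
      exact ⟨hpTverts _, hpTtree _⟩
  · intro i j hij
    rw [Set.eq_empty_iff_forall_notMem]
    rintro e ⟨hei, hej⟩
    by_cases h1 : (i : ℕ) < n - k <;> by_cases h2 : (j : ℕ) < n - k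
    · -- star / star
      have hfi : f i = starSub S (oo ⟨i, h1⟩) (oomem _) := by
        rw [hf]; simp only [dif_pos h1]
      have hfj : f j = starSub S (oo ⟨j, h2⟩) (oomem _) := by
        rw [hf]; simp only [dif_pos h2]
      rw [hfi] at hei
      rw [hfj] at hej
      obtain ⟨u, hu, heq1⟩ := starSub_edge hei
      obtain ⟨u', hu', heq2⟩ := starSub_edge hej
      rw [heq1, Sym2.eq_iff] at heq2
      have hne : oo ⟨(i:ℕ), h1⟩ ≠ oo ⟨(j:ℕ), h2⟩ := by
        intro h
        have := ooinj h
        rw [Fin.mk.injEq] at this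
        exact hij (Fin.ext this)
      rcases heq2 with ⟨ha, hb⟩ | ⟨ha, hb⟩
      · exact hne ha
      · exact oomem ⟨(i:ℕ), h1⟩ (by rw [ha]; exact hu')
    · -- star / path
      have hfi : f i = starSub S (oo ⟨i, h1⟩) (oomem _) := by
        rw [hf]; simp only [dif_pos h1]
      rw [hfi] at hei
      obtain ⟨u, hu, heq1⟩ := starSub_edge hei
      obtain ⟨x, y, ε, -, he', -⟩ := hEDGE _ (hfpT j h2).2 e ((hfpT j h2).1 ▸ hej)
      rw [heq1, Sym2.eq_iff] at he'
      rcases he' with ⟨ha, -⟩ | ⟨ha, -⟩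
      · exact oomem ⟨(i:ℕ), h1⟩ (by rw [ha]; exact ggmem x)
      · exact oomem ⟨(i:ℕ), h1⟩ (by rw [ha]; exact ggmem y)
    · -- path / star
      have hfj : f j = starSub S (oo ⟨j, h2⟩) (oomem _) := by
        rw [hf]; simp only [dif_pos h2]
      rw [hfj] at hej
      obtain ⟨u, hu, heq1⟩ := starSub_edge hej
      obtain ⟨x, y, ε, -, he', -⟩ := hEDGE _ (hfpT i h1).2 e ((hfpT i h1).1 ▸ hei)
      rw [heq1, Sym2.eq_iff] at he'
      rcases he' with ⟨ha, -⟩ | ⟨ha, -⟩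
      · exact oomem ⟨(j:ℕ), h2⟩ (by rw [ha]; exact ggmem x)
      · exact oomem ⟨(j:ℕ), h2⟩ (by rw [ha]; exact ggmem y)
    · -- path / path
      obtain ⟨x, y, ε, hε, he1, hs1⟩ := hEDGE _ (hfpT i h1).2 e ((hfpT i h1).1 ▸ hei)
      obtain ⟨x', y', ε', hε', he2, hs2⟩ := hEDGE _ (hfpT j h2).2 e ((hfpT j h2).1 ▸ hej)
      rw [he1, Sym2.eq_iff] at he2
      have hxy : (x : ℕ) + (y : ℕ) = (x' : ℕ) + (y' : ℕ) := by
        rcases he2 with ⟨ha, hb⟩ | ⟨ha, hb⟩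
        · rw [gginj ha, gginj hb]
        · rw [gginj ha, gginj hb]; omega
      rw [hxy, hs2] at hs1
      have hji : (i : ℕ) - (n - k) ≠ (j : ℕ) - (n - k) := by
        intro h
        exact hij (Fin.ext (by omega))
      omega

end Constr


end SteinerAux

theorem stmt5 (n k : ℕ) (hk2 : 2 ≤ k) (hkn : k ≤ n) :
    genEdgeConn (⊤ : SimpleGraph (Fin n)) k = n - (k + 1) / 2 := by
  classical
  have hcard : Fintype.card (Fin n) = n := Fintype.card_fin n
  have key : ∀ S : Set (Fin n), S.ncard = k →
      steinerEdgeConn (⊤ : SimpleGraph (Fin n)) S = n - (k + 1) / 2 := by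
    intro S hS
    have hub : ∀ m ∈ {m | ∃ f : Fin m → (⊤ : SimpleGraph (Fin n)).Subgraph,
        (∀ i, IsSteinerTree ⊤ S (f i)) ∧ ∀ i j, i ≠ j → EdgeDisjointTrees (f i) (f j)},
        m ≤ n - (k + 1) / 2 := by
      rintro m ⟨f, hst, hdisj⟩
      have := SteinerAux.upper_bound hS hk2 f (fun i => hst i)
        (fun i j hij => hdisj i j hij)
      rwa [hcard] at this
    have hmem : (n - (k + 1) / 2) ∈ {m | ∃ f : Fin m → (⊤ : SimpleGraph (Fin n)).Subgraph,
        (∀ i, IsSteinerTree ⊤ S (f i)) ∧ ∀ i j, i ≠ j → EdgeDisjointTrees (f i) (f j)} := by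
      have hcon := SteinerAux.construction (V := Fin n) hS hk2
      rw [hcard] at hcon
      obtain ⟨f, h1, h2⟩ := hcon
      exact ⟨f, fun i => h1 i, fun i j hij => h2 i j hij⟩
    rw [steinerEdgeConn]
    exact le_antisymm (csSup_le ⟨_, hmem⟩ hub) (le_csSup ⟨n - (k + 1) / 2, hub⟩ hmem)
  have hsetq : {m | ∃ S : Set (Fin n), S.ncard = k ∧
      steinerEdgeConn (⊤ : SimpleGraph (Fin n)) S = m} = {n - (k + 1) / 2} := by
    ext m
    simp only [Set.mem_setOf_eq, Set.mem_singleton_iff]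
    constructor
    · rintro ⟨S, h1, h2⟩
      rw [← h2, key S h1]
    · rintro rfl
      obtain ⟨B, -, hB⟩ := Finset.exists_subset_card_eq (s := (Finset.univ : Finset (Fin n))) (n := k)
        (by simpa using hkn)
      have hBn : (↑B : Set (Fin n)).ncard = k := by
        rw [Set.ncard_coe_finset]; exact hB
      exact ⟨↑B, hBn, key _ hBn⟩
  rw [genEdgeConn, hsetq, csInf_singleton]
end

section
/- Let k and n be two integers with 3 ≤ k ≤ n. For every connected simple graph G of order n, 1 ≤ κ_k(G) ≤ λ_k(G) ≤ n − ⌈k/2⌉. -/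
open SimpleGraph

variable {V : Type*}

open SimpleGraph Finset

lemma tree_weight_bound {W : Type*} [Fintype W] (G : SimpleGraph W) (hT : G.IsTree)
    (S' : Set W) {k : ℕ} (hk : 2 ≤ k) (hcard : S'.ncard = k) (Q : Sym2 W → ℕ)
    (hQ1 : ∀ a b, G.Adj a b → a ∈ S' → 2*(k-1) ≤ Q s(a,b))
    (hQ2 : ∀ a b, G.Adj a b → a ∈ S' → b ∈ S' → 2*k ≤ Q s(a,b)) :
    2*k*(k-1) ≤ ∑ e ∈ (Set.toFinite G.edgeSet).toFinset, Q e := by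
  classical
  have hSfin : S'.Finite := Set.toFinite _
  have hSne : S'.Nonempty := by
    rw [← Set.ncard_pos hSfin, hcard]; omega
  obtain ⟨r, hr⟩ := hSne
  -- unique paths to r
  have h := fun v => hT.existsUnique_path v r
  set P : ∀ v : W, G.Walk v r := fun v => (h v).choose with hPdef
  have hPpath : ∀ v, (P v).IsPath := fun v => (h v).choose_spec.1
  have hPuniq : ∀ v (q : G.Walk v r), q.IsPath → q = P v :=
    fun v q hq => (h v).choose_spec.2 q hq
  set μ : W → ℕ := fun v => (P v).length with hμdef
  set par : W → W := fun v => (P v).getVert 1 with hpardef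
  have hadj : ∀ v, v ≠ r → G.Adj v (par v) :=
    fun v hv => Walk.adj_snd (Walk.not_nil_of_ne hv)
  have hμpar : ∀ v, v ≠ r → μ (par v) + 1 = μ v := by
    intro v hv
    have hn : ¬ (P v).Nil := Walk.not_nil_of_ne hv
    have htail : (P v).tail = P (par v) :=
      hPuniq _ _ ((hPpath v).tail)
    have := Walk.length_tail_add_one hn
    rw [htail] at this
    exact this
  set pe : W → Sym2 W := fun v => s(v, par v) with hpedef
  have hinj : ∀ v v', v ≠ r → v' ≠ r → pe v = pe v' → v = v' := by
    intro v v' hv hv' hpe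
    by_contra hne
    rw [hpedef] at hpe
    simp only [Sym2.eq_iff] at hpe
    rcases hpe with ⟨h1, h2⟩ | ⟨h1, h2⟩
    · exact hne h1
    · have e1 := hμpar v hv
      have e2 := hμpar v' hv'
      rw [h2] at e1; rw [← h1] at e2
      omega
  have hedge : ∀ v, v ≠ r → pe v ∈ (Set.toFinite G.edgeSet).toFinset := by
    intro v hv; rw [Set.Finite.mem_toFinset]; exact (hadj v hv)
  set D : Finset W := hSfin.toFinset.erase r with hDdef
  have hDne : ∀ v ∈ D, v ≠ r ∧ v ∈ S' := by
    intro v hv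
    rw [hDdef, Finset.mem_erase, Set.Finite.mem_toFinset] at hv
    exact hv
  have hDcard : D.card = k - 1 := by
    rw [hDdef, Finset.card_erase_of_mem (by rwa [Set.Finite.mem_toFinset]),
      ← Set.ncard_eq_toFinset_card S' hSfin, hcard]
  set img : Finset (Sym2 W) := D.image pe with himgdef
  have himgcard : img.card = k - 1 := by
    rw [himgdef, Finset.card_image_of_injOn, hDcard]
    intro v hv v' hv' hpe
    exact hinj v v' (hDne v hv).1 (hDne v' hv').1 hpe
  have himgsub : img ⊆ (Set.toFinite G.edgeSet).toFinset := by
    intro e he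
    rw [himgdef, Finset.mem_image] at he
    obtain ⟨v, hv, rfl⟩ := he
    exact hedge v (hDne v hv).1
  by_cases hA : ∀ w : W, w ∈ S'
  · -- all vertices are in S'
    have hlow : ∀ e ∈ img, 2*k ≤ Q e := by
      intro e he
      rw [himgdef, Finset.mem_image] at he
      obtain ⟨v, hv, rfl⟩ := he
      exact hQ2 v (par v) (hadj v (hDne v hv).1) (hDne v hv).2 (hA _)
    calc 2*k*(k-1) = img.card • (2*k) := by rw [himgcard]; ring
    _ ≤ ∑ e ∈ img, Q e := Finset.card_nsmul_le_sum _ _ _ hlow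
    _ ≤ _ := Finset.sum_le_sum_of_subset himgsub
  · -- there is a vertex outside S'
    push_neg at hA
    have hAne : (Finset.univ.filter (fun w => w ∉ S')).Nonempty := by
      obtain ⟨u, hu⟩ := hA
      exact ⟨u, by simp [hu]⟩
    obtain ⟨u, hu, humin⟩ := Finset.exists_min_image _ μ hAne
    rw [Finset.mem_filter] at hu
    have hur : u ≠ r := fun h => hu.2 (h ▸ hr)
    have hparu : par u ∈ S' := by
      by_contra hpu
      have : μ (par u) + 1 = μ u := hμpar u hur
      have := humin (par u) (by simp [hpu])
      omega
    have hQu : 2*(k-1) ≤ Q (pe u) := by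
      have := hQ1 (par u) u ((hadj u hur).symm) hparu
      rwa [Sym2.eq_swap] at this
    have hnotmem : pe u ∉ img := by
      intro hmem
      rw [himgdef, Finset.mem_image] at hmem
      obtain ⟨v, hv, hpe⟩ := hmem
      have := hinj v u (hDne v hv).1 hur hpe
      exact hu.2 (this ▸ (hDne v hv).2)
    have hlow : ∀ e ∈ img, 2*(k-1) ≤ Q e := by
      intro e he
      rw [himgdef, Finset.mem_image] at he
      obtain ⟨v, hv, rfl⟩ := he
      exact hQ1 v (par v) (hadj v (hDne v hv).1) (hDne v hv).2
    have hsub2 : insert (pe u) img ⊆ (Set.toFinite G.edgeSet).toFinset := by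
      intro e he
      rw [Finset.mem_insert] at he
      rcases he with rfl | he
      · exact hedge u hur
      · exact himgsub he
    have hsum : ∑ e ∈ insert (pe u) img, Q e = Q (pe u) + ∑ e ∈ img, Q e :=
      Finset.sum_insert hnotmem
    have h1 : (k-1) * (2*(k-1)) ≤ ∑ e ∈ img, Q e := by
      have := Finset.card_nsmul_le_sum img Q (2*(k-1)) hlow
      rwa [himgcard, smul_eq_mul] at this
    have heq : 2*k*(k-1) = 2*(k-1) + (k-1) * (2*(k-1)) := by
      obtain ⟨m, rfl⟩ : ∃ m, k = m + 1 := ⟨k - 1, by omega⟩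
      simp only [Nat.add_sub_cancel]
      ring
    have key : 2*k*(k-1) ≤ Q (pe u) + ∑ e ∈ img, Q e := by
      rw [heq]; exact add_le_add hQu h1
    have h2 := Finset.sum_le_sum_of_subset (f := Q) hsub2
    rw [hsum] at h2
    exact le_trans key h2

lemma subgraph_tree_weight_bound {V : Type*} [Fintype V] {G : SimpleGraph V} (T : G.Subgraph)
    (hT : T.coe.IsTree) (S : Set V) (hSsub : S ⊆ T.verts) {k : ℕ} (hk : 2 ≤ k)
    (hcard : S.ncard = k) (Q : Sym2 V → ℕ)
    (hq1 : ∀ a b, T.Adj a b → a ∈ S → 2*(k-1) ≤ Q s(a,b))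
    (hq2 : ∀ a b, T.Adj a b → a ∈ S → b ∈ S → 2*k ≤ Q s(a,b)) :
    2*k*(k-1) ≤ ∑ e ∈ (Set.toFinite T.edgeSet).toFinset, Q e := by
  classical
  have : Fintype ↥T.verts := Fintype.ofFinite _
  have hpre : (Subtype.val ⁻¹' S : Set ↥T.verts).ncard = k := by
    have h1 : (Subtype.val '' (Subtype.val ⁻¹' S : Set ↥T.verts)) = S := by
      rw [Set.image_preimage_eq_inter_range, Subtype.range_val,
        Set.inter_eq_left.mpr hSsub]
    rw [← h1, Set.ncard_image_of_injective _ Subtype.val_injective] at hcard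
    exact hcard
  have hmain := tree_weight_bound T.coe hT (Subtype.val ⁻¹' S) hk hpre
    (Q ∘ Sym2.map Subtype.val)
    (fun a b hab ha => hq1 a b ((T.coe_adj a b) ▸ hab) ha)
    (fun a b hab ha hb => hq2 a b ((T.coe_adj a b) ▸ hab) ha hb)
  have himg : Finset.image (Sym2.map (Subtype.val : ↥T.verts → V))
      (Set.toFinite T.coe.edgeSet).toFinset = (Set.toFinite T.edgeSet).toFinset := by
    ext e
    simp only [Finset.mem_image, Set.Finite.mem_toFinset]
    rw [← SimpleGraph.Subgraph.image_coe_edgeSet_coe T]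
    exact (Set.mem_image _ _ _).symm
  have hsum : ∑ e ∈ (Set.toFinite T.edgeSet).toFinset, Q e
      = ∑ e ∈ (Set.toFinite T.coe.edgeSet).toFinset, (Q ∘ Sym2.map Subtype.val) e := by
    rw [← himg]
    exact Finset.sum_image (fun x _ y _ h => Sym2.map.injective Subtype.val_injective h)
  rw [hsum]
  exact hmain

lemma global_bound {n k m : ℕ} (hk : 3 ≤ k) (hkn : k ≤ n) {G : SimpleGraph (Fin n)}
    (Sf : Finset (Fin n)) (hsf : Sf.card = k) (f : Fin m → G.Subgraph)
    (hst : ∀ i, (↑Sf : Set (Fin n)) ⊆ (f i).verts ∧ (f i).coe.IsTree)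
    (hdisj : ∀ i j, i ≠ j → (f i).edgeSet ∩ (f j).edgeSet = ∅) :
    m ≤ n - (k+1)/2 := by
  classical
  set w2 : Fin n × Fin n → ℕ :=
    fun p => if p.1 ∈ Sf then (if p.2 ∈ Sf then k else 2*(k-1)) else 0 with hw2
  set Q : Sym2 (Fin n) → ℕ :=
    fun e => ∑ p ∈ Finset.univ.offDiag.filter (fun p => s(p.1,p.2) = e), w2 p with hQ
  have hQpair : ∀ a b : Fin n, a ≠ b → Q s(a,b) = w2 (a,b) + w2 (b,a) := by
    intro a b hab
    have hfib : Finset.univ.offDiag.filter (fun p => s(p.1,p.2) = s(a,b))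
        = ({(a,b), (b,a)} : Finset (Fin n × Fin n)) := by
      ext p
      obtain ⟨x, y⟩ := p
      simp only [Finset.mem_filter, Finset.mem_offDiag, Finset.mem_univ, true_and,
        Finset.mem_insert, Finset.mem_singleton, Sym2.eq_iff, Prod.mk.injEq]
      constructor
      · rintro ⟨hxy, (⟨rfl, rfl⟩ | ⟨rfl, rfl⟩)⟩
        · left; exact ⟨rfl, rfl⟩
        · right; exact ⟨rfl, rfl⟩
      · rintro (⟨rfl, rfl⟩ | ⟨rfl, rfl⟩)
        · exact ⟨hab, Or.inl ⟨rfl, rfl⟩⟩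
        · exact ⟨hab.symm, Or.inr ⟨rfl, rfl⟩⟩
    rw [hQ]
    simp only [hfib]
    exact Finset.sum_pair (by simp [Prod.ext_iff, hab])
  -- per-tree bound
  have htree : ∀ i, 2*k*(k-1) ≤ ∑ e ∈ (Set.toFinite (f i).edgeSet).toFinset, Q e := by
    intro i
    refine subgraph_tree_weight_bound (f i) (hst i).2 ↑Sf (hst i).1 (by omega)
      (by rw [Set.ncard_coe_finset, hsf]) Q ?_ ?_
    · intro a b hab ha
      rw [Finset.mem_coe] at ha
      rw [hQpair a b hab.ne]
      by_cases hb : b ∈ Sf <;> simp [hw2, ha, hb] <;> omega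
    · intro a b hab ha hb
      rw [Finset.mem_coe] at ha hb
      rw [hQpair a b hab.ne]
      simp [hw2, ha, hb] <;> omega
  -- global count
  set Ube : Finset (Sym2 (Fin n)) :=
    Finset.univ.biUnion (fun i : Fin m => (Set.toFinite (f i).edgeSet).toFinset) with hUbe
  have hpwd : Set.PairwiseDisjoint ↑(Finset.univ : Finset (Fin m))
      (fun i : Fin m => (Set.toFinite (f i).edgeSet).toFinset) := by
    intro i _ j _ hij
    simp only [Function.onFun]
    rw [Finset.disjoint_left]
    intro e he1 he2
    rw [Set.Finite.mem_toFinset] at he1 he2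
    have := hdisj i j hij
    have : e ∈ (f i).edgeSet ∩ (f j).edgeSet := ⟨he1, he2⟩
    rw [hdisj i j hij] at this
    exact this
  have hsum1 : ∑ e ∈ Ube, Q e = ∑ i : Fin m, ∑ e ∈ (Set.toFinite (f i).edgeSet).toFinset, Q e :=
    Finset.sum_biUnion hpwd
  have hlhs : m * (2*k*(k-1)) ≤ ∑ e ∈ Ube, Q e := by
    rw [hsum1]
    have := Finset.card_nsmul_le_sum Finset.univ
      (fun i : Fin m => ∑ e ∈ (Set.toFinite (f i).edgeSet).toFinset, Q e) (2*k*(k-1))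
      (fun i _ => htree i)
    simpa using this
  -- capacity
  have hcap : ∑ e ∈ Ube, Q e ≤ ∑ p ∈ Finset.univ.offDiag, w2 p := by
    have hfibdisj : (↑Ube : Set (Sym2 (Fin n))).PairwiseDisjoint
        (fun e => Finset.univ.offDiag.filter (fun p => s(p.1,p.2) = e)) := by
      intro e _ e' _ hee
      simp only [Function.onFun]
      rw [Finset.disjoint_left]
      intro p hp1 hp2
      rw [Finset.mem_filter] at hp1 hp2
      exact hee (hp1.2 ▸ hp2.2)
    rw [hQ]
    rw [← Finset.sum_biUnion hfibdisj]
    exact Finset.sum_le_sum_of_subset (Finset.biUnion_subset.mpr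
      (fun e _ => Finset.filter_subset _ _))
  have hprod : ∑ p ∈ Finset.univ ×ˢ Finset.univ, w2 p
      = k * (k*k + (n-k)*(2*(k-1))) := by
    rw [Finset.sum_product]
    have hinner : ∀ a : Fin n, ∑ b : Fin n, w2 (a, b)
        = if a ∈ Sf then (k*k + (n-k)*(2*(k-1))) else 0 := by
      intro a
      by_cases ha : a ∈ Sf
      · simp only [hw2, ha, if_true]
        rw [← Finset.sum_filter_add_sum_filter_not Finset.univ (fun b => b ∈ Sf)]
        have h1 : Finset.univ.filter (fun b => b ∈ Sf) = Sf := by simp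
        have h2 : (Finset.univ.filter (fun b => ¬ b ∈ Sf)).card = n - k := by
          simp [Finset.filter_not, Finset.card_sdiff_of_subset (Finset.subset_univ _), hsf]
        rw [Finset.sum_ite_of_true, Finset.sum_ite_of_false]
        · simp [h1, hsf, h2, Finset.sum_const, mul_comm]
        · intro b hb; simpa using (Finset.mem_filter.mp hb).2
        · intro b hb; exact (Finset.mem_filter.mp hb).2
      · simp [hw2, ha]
    rw [Finset.sum_congr rfl (fun a _ => hinner a)]
    rw [Finset.sum_ite_mem, Finset.univ_inter, Finset.sum_const, hsf, smul_eq_mul]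
  have hdiag : ∑ p ∈ Finset.univ.diag, w2 p = k * k := by
    rw [Finset.sum_diag]
    have : ∀ a : Fin n, w2 (a, a) = if a ∈ Sf then k else 0 := by
      intro a; by_cases ha : a ∈ Sf <;> simp [hw2, ha]
    rw [Finset.sum_congr rfl (fun a _ => this a)]
    rw [Finset.sum_ite_mem, Finset.univ_inter, Finset.sum_const, hsf, smul_eq_mul]
  have hoffeq : (Finset.univ.offDiag : Finset (Fin n × Fin n))
      = (Finset.univ ×ˢ Finset.univ) \ Finset.univ.diag :=
    (Finset.product_sdiff_diag _).symm
  have hdsub : (Finset.univ.diag : Finset (Fin n × Fin n)) ⊆ Finset.univ ×ˢ Finset.univ := by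
    intro p hp
    rw [Finset.mem_diag] at hp
    simp
  have hsd := Finset.sum_sdiff (f := w2) hdsub
  rw [hdiag, hprod] at hsd
  have hoffsum : ∑ p ∈ Finset.univ.offDiag, w2 p = k * (k*k + (n-k)*(2*(k-1))) - k*k := by
    rw [hoffeq]; omega
  -- final arithmetic
  obtain ⟨c, rfl⟩ : ∃ c, k = c + 1 := ⟨k - 1, by omega⟩
  obtain ⟨d, rfl⟩ : ∃ d, n = (c+1) + d := ⟨n - (c+1), by omega⟩
  have hid : (c+1) * ((c+1)*(c+1) + ((c+1)+d-(c+1))*(2*((c+1)-1))) - (c+1)*(c+1)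
      = ((c+1)*c) * ((c+1) + 2*d) := by
    simp only [Nat.add_sub_cancel, Nat.add_sub_cancel_left]
    have : (c+1) * ((c+1)*(c+1) + d*(2*c)) = ((c+1)*c) * ((c+1) + 2*d) + (c+1)*(c+1) := by
      ring
    omega
  have hfinal : ((c+1)*c) * (2 * m) ≤ ((c+1)*c) * ((c+1) + 2*d) := by
    have h1 : m * (2*(c+1)*((c+1)-1)) = ((c+1)*c) * (2*m) := by
      simp only [Nat.add_sub_cancel]; ring
    calc ((c+1)*c) * (2*m) = m * (2*(c+1)*((c+1)-1)) := h1.symm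
    _ ≤ ∑ e ∈ Ube, Q e := hlhs
    _ ≤ ∑ p ∈ Finset.univ.offDiag, w2 p := hcap
    _ = _ := by rw [hoffsum, hid]
  have : 2 * m ≤ (c+1) + 2*d := Nat.le_of_mul_le_mul_left hfinal (Nat.mul_pos (by omega) (by omega))
  omega

lemma exists_isTree_le {V : Type*} [Fintype V] {G : SimpleGraph V} (hG : G.Connected) :
    ∃ H ≤ G, H.IsTree := by
  classical
  suffices h : ∀ N (G : SimpleGraph V), G.Connected → G.edgeSet.ncard ≤ N → ∃ H ≤ G, H.IsTree by
    exact h G.edgeSet.ncard G hG le_rfl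
  intro N
  induction N with
  | zero =>
    intro G hG hcard
    refine ⟨G, le_rfl, hG, ?_⟩
    intro v c hc
    have hedge : s(v, c.getVert 1) ∈ G.edgeSet := by
      have : ¬ c.Nil := hc.not_nil
      exact (SimpleGraph.Walk.adj_snd this)
    have : G.edgeSet.ncard = 0 := by omega
    rw [Set.ncard_eq_zero (Set.toFinite _)] at this
    rw [this] at hedge
    exact hedge
  | succ N ih =>
    intro G hG hcard
    by_cases hac : G.IsAcyclic
    · exact ⟨G, le_rfl, hG, hac⟩
    · rw [SimpleGraph.isAcyclic_iff_forall_adj_isBridge] at hac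
      push_neg at hac
      obtain ⟨v, w, hadj, hbr⟩ := hac
      rw [SimpleGraph.isBridge_iff] at hbr
      push_neg at hbr
      have hreach : (G \ SimpleGraph.fromEdgeSet {s(v, w)}).Reachable v w := hbr
      set G' := G \ SimpleGraph.fromEdgeSet {s(v, w)} with hG'
      have hkey : ∀ {a b : V}, G.Adj a b → G'.Reachable a b := by
        intro a b hab
        by_cases h : s(a, b) = s(v, w)
        · rw [Sym2.eq_iff] at h
          rcases h with ⟨rfl, rfl⟩ | ⟨rfl, rfl⟩
          · exact hreach
          · exact hreach.symm
        · refine SimpleGraph.Adj.reachable ?_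
          rw [hG', SimpleGraph.sdiff_adj, SimpleGraph.fromEdgeSet_adj]
          exact ⟨hab, fun hc => h hc.1⟩
      have hconn' : G'.Connected := by
        rw [SimpleGraph.connected_iff]
        refine ⟨?_, hG.nonempty⟩
        intro a b
        obtain ⟨p⟩ := hG.preconnected a b
        induction p with
        | nil => exact SimpleGraph.Reachable.refl _
        | cons h q ihp => exact (hkey h).trans ihp
      have hsub : G'.edgeSet ⊆ G.edgeSet := SimpleGraph.edgeSet_mono sdiff_le
      have hnotmem : s(v, w) ∉ G'.edgeSet := by
        rw [SimpleGraph.mem_edgeSet, hG', SimpleGraph.sdiff_adj,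
          SimpleGraph.fromEdgeSet_adj]
        push_neg
        intro _
        exact ⟨rfl, hadj.ne⟩
      have hlt : G'.edgeSet.ncard < G.edgeSet.ncard := by
        apply Set.ncard_lt_ncard _ (Set.toFinite _)
        exact ⟨hsub, fun hss => hnotmem (hss hadj)⟩
      obtain ⟨H, hH, hHt⟩ := ih G' hconn' (by omega)
      exact ⟨H, le_trans hH sdiff_le, hHt⟩

lemma exists_spanning_tree_subgraph {V : Type*} [Fintype V] {G : SimpleGraph V}
    (hG : G.Connected) : ∃ T : G.Subgraph, T.verts = Set.univ ∧ T.coe.IsTree := by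
  obtain ⟨H, hle, hHt⟩ := exists_isTree_le hG
  refine ⟨SimpleGraph.toSubgraph H hle, rfl, ?_⟩
  have e : (SimpleGraph.toSubgraph H hle).coe ≃g H :=
    { toEquiv := Equiv.Set.univ V
      map_rel_iff' := by intro a b; rfl }
  constructor
  · rw [e.connected_iff]
    exact hHt.isConnected
  · intro v c hc
    exact hHt.IsAcyclic (c.map e.toHom) (hc.map e.toEquiv.injective)

lemma tree_edge_nonempty {V : Type*} [Fintype V] {G : SimpleGraph V} (T : G.Subgraph)
    (hT : T.coe.IsTree) {S : Set V} (hS : S ⊆ T.verts) (h2 : 2 ≤ S.ncard) :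
    T.edgeSet.Nonempty := by
  obtain ⟨x, y, hx, hy, hxy⟩ := (Set.one_lt_ncard_iff (Set.toFinite _)).mp h2
  have hx' : x ∈ T.verts := hS hx
  have hy' : y ∈ T.verts := hS hy
  obtain ⟨p⟩ := hT.isConnected.preconnected ⟨x, hx'⟩ ⟨y, hy'⟩
  have hne : (⟨x, hx'⟩ : ↥T.verts) ≠ ⟨y, hy'⟩ := by
    intro h; exact hxy (congrArg Subtype.val h)
  have hadj := SimpleGraph.Walk.adj_snd (p := p) (SimpleGraph.Walk.not_nil_of_ne (p := p) hne)
  rw [SimpleGraph.Subgraph.coe_adj] at hadj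
  exact ⟨s(x, ↑(p.getVert 1)), hadj⟩

theorem stmt6 (n k : ℕ) (hk3 : 3 ≤ k) (hkn : k ≤ n)
    (G : SimpleGraph (Fin n)) (hG : G.Connected) :
    1 ≤ genConn G k ∧ genConn G k ≤ genEdgeConn G k ∧
      genEdgeConn G k ≤ n - (k + 1) / 2 := by
  classical
  obtain ⟨Sf, -, hSfcard⟩ := Finset.exists_subset_card_eq
    (s := (Finset.univ : Finset (Fin n))) (n := k) (by simpa using hkn)
  have hSfn : (↑Sf : Set (Fin n)).ncard = k := by rw [Set.ncard_coe_finset, hSfcard]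
  set κs : Set (Fin n) → Set ℕ := fun S => {m | ∃ f : Fin m → G.Subgraph,
    (∀ i, IsSteinerTree G S (f i)) ∧ ∀ i j, i ≠ j → InternallyDisjoint S (f i) (f j)} with hκs
  set eds : Set (Fin n) → Set ℕ := fun S => {m | ∃ f : Fin m → G.Subgraph,
    (∀ i, IsSteinerTree G S (f i)) ∧ ∀ i j, i ≠ j → EdgeDisjointTrees (f i) (f j)} with heds
  have hκdef : ∀ S, steinerConn G S = sSup (κs S) := fun S => rfl
  have heddef : ∀ S, steinerEdgeConn G S = sSup (eds S) := fun S => rfl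
  have hzeroκ : ∀ S, 0 ∈ κs S := fun S =>
    ⟨fun i => i.elim0, fun i => i.elim0, fun i => i.elim0⟩
  have hzeroed : ∀ S, 0 ∈ eds S := fun S =>
    ⟨fun i => i.elim0, fun i => i.elim0, fun i => i.elim0⟩
  have hsubset : ∀ S, κs S ⊆ eds S := by
    rintro S m ⟨f, h1, h2⟩
    exact ⟨f, h1, fun i j hij => (h2 i j hij).1⟩
  have hbdded : ∀ S : Set (Fin n), S.ncard = k → BddAbove (eds S) := by
    intro S hS
    refine ⟨Fintype.card (Sym2 (Fin n)), ?_⟩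
    rintro m ⟨f, hst, hdisj⟩
    have hne : ∀ i, (f i).edgeSet.Nonempty := fun i =>
      tree_edge_nonempty (f i) (hst i).2 (hst i).1 (by omega)
    choose e he using hne
    have hinj : Function.Injective e := by
      intro i j hij
      by_contra hne'
      have : e i ∈ (f i).edgeSet ∩ (f j).edgeSet := ⟨he i, hij ▸ he j⟩
      rw [hdisj i j hne'] at this
      exact this
    simpa using Fintype.card_le_of_injective e hinj
  have hbddκ : ∀ S : Set (Fin n), S.ncard = k → BddAbove (κs S) := fun S hS =>
    (hbdded S hS).mono (hsubset S)
  have honeκ : ∀ S : Set (Fin n), 1 ∈ κs S := by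
    intro S
    obtain ⟨T, hTverts, hTtree⟩ := exists_spanning_tree_subgraph hG
    refine ⟨fun _ => T, fun _ => ⟨by rw [hTverts]; exact Set.subset_univ _, hTtree⟩, ?_⟩
    intro i j hij
    exact absurd (Subsingleton.elim i j) hij
  -- the main min-sets
  have h𝒦ne : {m | ∃ S : Set (Fin n), S.ncard = k ∧ steinerConn G S = m}.Nonempty :=
    ⟨steinerConn G ↑Sf, ↑Sf, hSfn, rfl⟩
  have hℒne : {m | ∃ S : Set (Fin n), S.ncard = k ∧ steinerEdgeConn G S = m}.Nonempty :=
    ⟨steinerEdgeConn G ↑Sf, ↑Sf, hSfn, rfl⟩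
  have hgc : genConn G k = sInf {m | ∃ S : Set (Fin n), S.ncard = k ∧ steinerConn G S = m} := rfl
  have hgec : genEdgeConn G k
      = sInf {m | ∃ S : Set (Fin n), S.ncard = k ∧ steinerEdgeConn G S = m} := rfl
  refine ⟨?_, ?_, ?_⟩
  · -- 1 ≤ genConn
    rw [hgc]
    obtain ⟨S1, hS1, hS1e⟩ := Nat.sInf_mem h𝒦ne
    rw [← hS1e, hκdef]
    exact le_csSup (hbddκ S1 hS1) (honeκ S1)
  · -- genConn ≤ genEdgeConn
    rw [hgc, hgec]
    obtain ⟨S2, hS2, hS2e⟩ := Nat.sInf_mem hℒne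
    rw [← hS2e]
    refine le_trans (Nat.sInf_le ⟨S2, hS2, rfl⟩) ?_
    rw [hκdef, heddef]
    exact csSup_le_csSup (hbdded S2 hS2) ⟨0, hzeroκ S2⟩ (hsubset S2)
  · -- genEdgeConn ≤ n - ⌈k/2⌉
    rw [hgec]
    refine le_trans (Nat.sInf_le ⟨↑Sf, hSfn, rfl⟩) ?_
    rw [heddef]
    refine csSup_le ⟨0, hzeroed ↑Sf⟩ ?_
    rintro m ⟨f, hst, hdisj⟩
    exact global_bound hk3 hkn Sf hSfcard f (fun i => hst i) (fun i j hij => hdisj i j hij)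
end

section
/- For every two integers n and k with 4 ≤ k ≤ n, if k is even and M is an edge set of the complete graph K_n such that Δ(K_n[M]) ≥ k/2 + 1, then κ_k(K_n \ M) ≤ λ_k(K_n \ M) < n − k/2 − 1. -/
open SimpleGraph

variable {V : Type*}

lemma steiner_adj {G : SimpleGraph V} {S : Set V} {T : G.Subgraph}
    (hT : IsSteinerTree G S T) {v u : V} (hv : v ∈ S) (hu : u ∈ S) (hne : v ≠ u) :
    ∃ w, T.Adj v w := by
  obtain ⟨hS, htree⟩ := hT
  obtain ⟨p⟩ := htree.isConnected.preconnected ⟨v, hS hv⟩ ⟨u, hS hu⟩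
  cases p with
  | nil => exact absurd rfl hne
  | cons h q => exact ⟨_, (Subgraph.coe_adj _ _ _).mp h⟩

/-- the number of edge-disjoint S-Steiner trees is bounded by the G-degree of any v ∈ S. -/
lemma edgeTrees_bound {n : ℕ} (G : SimpleGraph (Fin n)) (S : Set (Fin n))
    {v : Fin n} (hv : v ∈ S) (h2 : 2 ≤ S.ncard) :
    ∀ m ∈ {m | ∃ f : Fin m → G.Subgraph, (∀ i, IsSteinerTree G S (f i)) ∧
      ∀ i j, i ≠ j → EdgeDisjointTrees (f i) (f j)}, m ≤ (G.neighborSet v).ncard := by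
  have hSfin : S.Finite := Set.toFinite S
  obtain ⟨a, b, ha, hb, hab⟩ := (Set.one_lt_ncard_iff hSfin).mp (by omega)
  -- get a vertex u ∈ S different from v
  obtain ⟨u, hu, hvu⟩ : ∃ u ∈ S, v ≠ u := by
    rcases eq_or_ne v a with rfl | h
    · exact ⟨b, hb, hab⟩
    · exact ⟨a, ha, h⟩
  rintro m ⟨f, hf, hdisj⟩
  choose w hw using fun i => steiner_adj (hf i) hv hu hvu
  have hinj : Function.Injective fun i => (⟨w i, (hw i).adj_sub⟩ :
      G.neighborSet v) := by
    intro i j hij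
    by_contra hne
    have h1 : s(v, w i) ∈ (f i).edgeSet := (Subgraph.mem_edgeSet).mpr (hw i)
    have h2' : s(v, w j) ∈ (f j).edgeSet := (Subgraph.mem_edgeSet).mpr (hw j)
    have : w i = w j := congrArg Subtype.val hij
    rw [this] at h1
    have := hdisj i j hne
    exact absurd (Set.mem_inter h1 h2') (by rw [this]; exact fun h => h)
  calc m = Nat.card (Fin m) := by simp
    _ ≤ Nat.card (G.neighborSet v) := Nat.card_le_card_of_injective _ hinj
    _ = (G.neighborSet v).ncard := Nat.card_coe_set_eq _

lemma trees_set_nonempty {G : SimpleGraph V} (S : Set V)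
    (P : G.Subgraph → G.Subgraph → Prop) :
    Set.Nonempty {m | ∃ f : Fin m → G.Subgraph, (∀ i, IsSteinerTree G S (f i)) ∧
      ∀ i j, i ≠ j → P (f i) (f j)} :=
  ⟨0, fun i : Fin 0 => i.elim0, fun i => i.elim0, fun i => i.elim0⟩

lemma degree_bound {n t : ℕ} {M : Set (Sym2 (Fin n))}
    (hM : M ⊆ (⊤ : SimpleGraph (Fin n)).edgeSet)
    {v : Fin n} (hv : t ≤ {e ∈ M | v ∈ e}.ncard) :
    (((⊤ : SimpleGraph (Fin n)).deleteEdges M).neighborSet v).ncard + t + 1 ≤ n := by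
  classical
  set N := (((⊤ : SimpleGraph (Fin n)).deleteEdges M).neighborSet v) with hN
  set B := {w : Fin n | w ≠ v ∧ s(v, w) ∈ M} with hB
  have htB : t ≤ B.ncard := by
    have hsub : {e ∈ M | v ∈ e} ⊆ (fun w => s(v, w)) '' B := by
      rintro e ⟨heM, hve⟩
      refine ⟨Sym2.Mem.other' hve, ⟨?_, ?_⟩, Sym2.other_spec' hve⟩
      · intro h
        have hd : ¬ e.IsDiag := by
          have := hM heM
          rw [edgeSet_top] at this
          exact this
        apply hd
        rw [← Sym2.other_spec' hve, h]
        exact Sym2.mk_isDiag_iff.mpr rfl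
      · rw [Sym2.other_spec' hve]; exact heM
    have himg : ((fun w => s(v, w)) '' B).ncard = B.ncard :=
      Set.ncard_image_of_injOn (fun a _ b _ hab => Sym2.congr_right.mp hab)
    calc t ≤ {e ∈ M | v ∈ e}.ncard := hv
      _ ≤ ((fun w => s(v, w)) '' B).ncard := Set.ncard_le_ncard hsub (Set.toFinite _)
      _ = B.ncard := himg
  have hdisj : Disjoint N B := by
    rw [Set.disjoint_left]
    rintro w hwN ⟨_, hwB⟩
    rw [hN, mem_neighborSet, deleteEdges_adj] at hwN
    exact hwN.2 hwB
  have hvnot : v ∉ N ∪ B := by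
    rintro (h | h)
    · rw [hN, mem_neighborSet, deleteEdges_adj, top_adj] at h
      exact h.1 rfl
    · exact h.1 rfl
  have hcard : (insert v (N ∪ B)).ncard = N.ncard + B.ncard + 1 := by
    rw [Set.ncard_insert_of_notMem hvnot (Set.toFinite _),
      Set.ncard_union_eq hdisj (Set.toFinite _) (Set.toFinite _)]
  have hle : (insert v (N ∪ B)).ncard ≤ n := by
    have := Set.ncard_le_ncard (Set.subset_univ (insert v (N ∪ B))) (Set.toFinite _)
    rwa [Set.ncard_univ, Nat.card_eq_fintype_card, Fintype.card_fin] at this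
  omega

theorem stmt9 (n k : ℕ) (hk4 : 4 ≤ k) (hkn : k ≤ n) (hkeven : Even k)
    (M : Set (Sym2 (Fin n))) (hM : M ⊆ (⊤ : SimpleGraph (Fin n)).edgeSet)
    (hΔ : k / 2 + 1 ≤ edgeMaxDeg M) :
    genConn ((⊤ : SimpleGraph (Fin n)).deleteEdges M) k ≤ genEdgeConn ((⊤ : SimpleGraph (Fin n)).deleteEdges M) k ∧
      genEdgeConn ((⊤ : SimpleGraph (Fin n)).deleteEdges M) k < n - k / 2 - 1 := by
  classical
  set G := (⊤ : SimpleGraph (Fin n)).deleteEdges M with hG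
  -- find a vertex of high M-degree
  have hsetfin : ({d | ∃ v : Fin n, d = {e ∈ M | v ∈ e}.ncard}).Finite := by
    have heq : {d | ∃ v : Fin n, d = {e ∈ M | v ∈ e}.ncard} =
        (fun v : Fin n => {e ∈ M | v ∈ e}.ncard) '' Set.univ := by
      ext d; simp [eq_comm]
    rw [heq]; exact Set.finite_univ.image _
  have hne : ({d | ∃ v : Fin n, d = {e ∈ M | v ∈ e}.ncard}).Nonempty :=
    ⟨_, ⟨⟨0, by omega⟩, rfl⟩⟩
  obtain ⟨v, hveq⟩ := Nat.sSup_mem hne hsetfin.bddAbove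
  have hvdeg : k / 2 + 1 ≤ {e ∈ M | v ∈ e}.ncard := by
    unfold edgeMaxDeg at hΔ; omega
  -- degree bound in G
  have hdeg := degree_bound hM hvdeg
  rw [← hG] at hdeg
  -- choose S of size k containing v
  obtain ⟨S, hvS, -, hScard⟩ := Set.exists_subsuperset_card_eq (n := k)
    (Set.subset_univ {v}) (by rw [Set.ncard_singleton]; omega)
    (by rw [Set.ncard_univ, Nat.card_eq_fintype_card, Fintype.card_fin]; exact hkn)
  have hvS' : v ∈ S := hvS rfl
  have hlamS : steinerEdgeConn G S ≤ (G.neighborSet v).ncard :=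
    csSup_le (trees_set_nonempty S _) (edgeTrees_bound G S hvS' (by omega))
  have h1 : genEdgeConn G k ≤ steinerEdgeConn G S := Nat.sInf_le ⟨S, hScard, rfl⟩
  constructor
  · -- κ_k ≤ λ_k
    have hE : Set.Nonempty {m | ∃ S : Set (Fin n), S.ncard = k ∧ steinerEdgeConn G S = m} :=
      ⟨_, S, hScard, rfl⟩
    obtain ⟨S', hS'card, hS'eq⟩ := Nat.sInf_mem hE
    have hS'ne : S'.Nonempty := by
      apply Set.nonempty_of_ncard_ne_zero; omega
    obtain ⟨v', hv'⟩ := hS'ne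
    have hkl : steinerConn G S' ≤ steinerEdgeConn G S' := by
      apply csSup_le_csSup ⟨_, edgeTrees_bound G S' hv' (by omega)⟩
        (trees_set_nonempty S' _)
      rintro m ⟨f, hf, hd⟩
      exact ⟨f, hf, fun i j hij => (hd i j hij).1⟩
    calc genConn G k ≤ steinerConn G S' := Nat.sInf_le ⟨S', hS'card, rfl⟩
      _ ≤ steinerEdgeConn G S' := hkl
      _ = genEdgeConn G k := hS'eq
  · omega
end

section
/- For every two integers n and k with 4 ≤ k ≤ n, if k is even and M is an edge set of the complete graph K_n such that |M| ≥ k and Δ(K_n[M]) ≥ 2, then λ_k(K_n \ M) < n − k/2 − 1. -/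
open SimpleGraph

variable {V : Type*}

section Aux

lemma tree_incident_edges {n : ℕ} {G : SimpleGraph (Fin n)} (T : G.Subgraph)
    (hT : T.coe.IsTree) (A : Set (Fin n)) (hA : A ⊆ T.verts) (r : Fin n) (hr : r ∈ T.verts)
    (hrA : r ∉ A) : A.ncard ≤ {e ∈ T.edgeSet | ∃ a ∈ A, a ∈ e}.ncard := by
  classical
  set R : T.verts := ⟨r, hr⟩ with hR
  have hconn := hT.isConnected
  clear_value R
  set D : Fin n → ℕ := fun x => if h : x ∈ T.verts then T.coe.dist ⟨x, h⟩ R else 0 with hD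
  have key : ∀ a, a ∈ A → ∃ b : Fin n, T.Adj a b ∧ D a = D b + 1 := by
    intro a ha
    have haT : a ∈ T.verts := hA ha
    have hne : (⟨a, haT⟩ : T.verts) ≠ R := by
      intro h
      rw [hR] at h
      have : a = r := congrArg Subtype.val h
      exact hrA (this ▸ ha)
    have hd0 : T.coe.dist ⟨a, haT⟩ R ≠ 0 :=
      dist_ne_zero_iff_ne_and_reachable.mpr ⟨hne, hconn.preconnected _ _⟩
    obtain ⟨p, hp⟩ := exists_walk_of_dist_ne_zero hd0
    cases p with
    | nil => simp at hp; exact (hne rfl).elim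
    | cons hadj q =>
      rename_i c
      refine ⟨c.val, hadj, ?_⟩
      have h1 : T.coe.dist c R ≤ q.length := dist_le q
      have h2 : T.coe.dist ⟨a, haT⟩ R ≤ T.coe.dist ⟨a, haT⟩ c + T.coe.dist c R :=
        hconn.dist_triangle
      have h3 : T.coe.dist ⟨a, haT⟩ c ≤ 1 := dist_le (Walk.cons hadj Walk.nil)
      simp only [Walk.length_cons] at hp
      have hDa : D a = T.coe.dist ⟨a, haT⟩ R := by simp [hD, haT]
      have hDb : D c.val = T.coe.dist c R := by
        simp only [hD, c.prop, dif_pos]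
      rw [hDa, hDb]
      omega
  set f : Fin n → Sym2 (Fin n) :=
    fun a => if h : a ∈ A then s(a, (key a h).choose) else s(a, a) with hf
  have hfmem : ∀ a ∈ A, f a ∈ {e ∈ T.edgeSet | ∃ a ∈ A, a ∈ e} := by
    intro a ha
    have := (key a ha).choose_spec
    refine ⟨?_, a, ha, ?_⟩
    · simp only [hf, dif_pos ha]
      exact this.1
    · rw [hf]; simp only [dif_pos ha]
      exact Sym2.mem_mk_left _ _
  have hinj : Set.InjOn f A := by
    intro a ha a' ha' heq
    simp only [hf, dif_pos ha, dif_pos ha', Sym2.eq_iff] at heq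
    obtain ⟨h1, h2⟩ := (key a ha).choose_spec
    obtain ⟨h1', h2'⟩ := (key a' ha').choose_spec
    rcases heq with ⟨h, _⟩ | ⟨hx, hy⟩
    · exact h
    · rw [hy] at h2
      rw [← hx] at h2'
      omega
  calc A.ncard = (f '' A).ncard := (Set.ncard_image_of_injOn hinj).symm
    _ ≤ _ := Set.ncard_le_ncard (by rintro e ⟨a, ha, rfl⟩; exact hfmem a ha) (Set.toFinite _)


lemma sym2_exists_mem {α : Type*} (e : Sym2 α) : ∃ v, v ∈ e := by
  induction e using Sym2.ind with
  | _ x y => exact ⟨x, Sym2.mem_mk_left x y⟩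

lemma greedy_cover {n : ℕ} (N : Set (Sym2 (Fin n))) (j : ℕ) :
    ∃ C : Set (Fin n), C.ncard ≤ j ∧ min j N.ncard ≤ {e ∈ N | ∃ v ∈ C, v ∈ e}.ncard := by
  induction j with
  | zero => exact ⟨∅, by simp, by simp⟩
  | succ j ih =>
    obtain ⟨C, hC1, hC2⟩ := ih
    by_cases h : min (j+1) N.ncard ≤ {e ∈ N | ∃ v ∈ C, v ∈ e}.ncard
    · exact ⟨C, hC1.trans (Nat.le_succ j), h⟩
    · push_neg at h
      have hsub : {e ∈ N | ∃ v ∈ C, v ∈ e} ⊆ N := fun e he => he.1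
      have hex : ∃ e, e ∈ N ∧ e ∉ {e ∈ N | ∃ v ∈ C, v ∈ e} := by
        by_contra hcon
        push_neg at hcon
        have : N ⊆ {e ∈ N | ∃ v ∈ C, v ∈ e} := fun e he => hcon e he
        have := Set.ncard_le_ncard this (Set.toFinite _)
        omega
      obtain ⟨e, heN, heC⟩ := hex
      obtain ⟨v, hv⟩ := sym2_exists_mem e
      refine ⟨insert v C, (Set.ncard_insert_le v C).trans (by omega), ?_⟩
      have hsub2 : insert e {e ∈ N | ∃ v ∈ C, v ∈ e} ⊆ {e ∈ N | ∃ w ∈ insert v C, w ∈ e} := by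
        rintro x (rfl | hx)
        · exact ⟨heN, v, Set.mem_insert v C, hv⟩
        · exact ⟨hx.1, hx.2.choose, Set.mem_insert_of_mem _ hx.2.choose_spec.1,
            hx.2.choose_spec.2⟩
      have h1 : ({e ∈ N | ∃ v ∈ C, v ∈ e}).ncard + 1 = (insert e {e ∈ N | ∃ v ∈ C, v ∈ e}).ncard :=
        (Set.ncard_insert_of_notMem heC (Set.toFinite _)).symm
      have h2 := Set.ncard_le_ncard hsub2 (Set.toFinite _)
      omega

lemma count_touch {n k : ℕ} (A : Set (Fin n)) (hA : A.ncard = k) (hkn : k ≤ n) :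
    {e : Sym2 (Fin n) | ¬ e.IsDiag ∧ ∃ a ∈ A, a ∈ e}.ncard
      = n.choose 2 - (n - k).choose 2 := by
  classical
  set U : Set (Sym2 (Fin n)) := {e | ¬ e.IsDiag} with hU
  set I : Set (Sym2 (Fin n)) := {e | ¬ e.IsDiag ∧ ∀ a ∈ e, a ∉ A} with hI
  have hnd := Sym2.card_subtype_not_diag (α := Fin n)
  rw [Fintype.card_fin] at hnd
  have hUcard : U.ncard = n.choose 2 := by
    rw [← Nat.card_coe_set_eq, Nat.card_eq_fintype_card, ← hnd]
    exact Fintype.card_congr (Equiv.subtypeEquivRight (fun _ => Iff.rfl))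
  have hIcard : I.ncard = (n - k).choose 2 := by
    have himg : I = (Sym2.map (Subtype.val : ↥(Aᶜ) → Fin n)) '' {z | ¬ z.IsDiag} := by
      ext e
      constructor
      · rintro ⟨hd, hall⟩
        induction e using Sym2.ind with
        | _ x y =>
          refine ⟨s(⟨x, hall x (Sym2.mem_mk_left x y)⟩, ⟨y, hall y (Sym2.mem_mk_right x y)⟩), ?_, rfl⟩
          simp only [Set.mem_setOf_eq, Sym2.isDiag_iff_proj_eq] at hd ⊢
          exact fun hc => hd (congrArg Subtype.val hc)
      · rintro ⟨z, hz, rfl⟩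
        refine ⟨?_, ?_⟩
        · rwa [Sym2.isDiag_map Subtype.val_injective]
        · intro a ha
          rw [Sym2.mem_map] at ha
          obtain ⟨b, _, rfl⟩ := ha
          exact b.prop
    rw [himg, Set.ncard_image_of_injective _ (Sym2.map.injective Subtype.val_injective)]
    rw [← Nat.card_coe_set_eq, Nat.card_eq_fintype_card]
    have hcompl : Fintype.card ↥(Aᶜ) = n - k := by
      rw [Fintype.card_compl_set, Fintype.card_fin]
      congr 1
      rw [← hA, Set.ncard_eq_toFinset_card', Set.toFinset_card]
    rw [← hcompl, ← Sym2.card_subtype_not_diag]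
    exact Fintype.card_congr (Equiv.subtypeEquivRight (fun _ => Iff.rfl))
  have hdiff : {e : Sym2 (Fin n) | ¬ e.IsDiag ∧ ∃ a ∈ A, a ∈ e} = U \ I := by
    ext e
    simp only [hU, hI, Set.mem_diff, Set.mem_setOf_eq]
    constructor
    · rintro ⟨hd, a, ha, hae⟩
      exact ⟨hd, fun hc => hc.2 a hae ha⟩
    · rintro ⟨hd, hc⟩
      refine ⟨hd, ?_⟩
      by_contra hcc
      push_neg at hcc
      exact hc ⟨hd, fun a ha hA' => hcc a hA' ha⟩
  have hIsub : I ⊆ U := fun e he => he.1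
  rw [hdiff, Set.ncard_diff hIsub (Set.toFinite _), hUcard, hIcard]

end Aux

theorem stmt11 (n k : ℕ) (hk4 : 4 ≤ k) (hkn : k ≤ n) (hkeven : Even k)
    (M : Set (Sym2 (Fin n))) (hM : M ⊆ (⊤ : SimpleGraph (Fin n)).edgeSet)
    (hMcard : k ≤ M.ncard) (hΔ : 2 ≤ edgeMaxDeg M) :
    genEdgeConn ((⊤ : SimpleGraph (Fin n)).deleteEdges M) k < n - k / 2 - 1 := by
  classical
  obtain ⟨t, ht⟩ := hkeven
  obtain ⟨u, hu⟩ : ∃ u, t = u + 2 := ⟨t - 2, by omega⟩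
  obtain ⟨c, hc⟩ : ∃ c, n = c + 2 * u + 4 := ⟨n - 2 * u - 4, by omega⟩
  set G := (⊤ : SimpleGraph (Fin n)).deleteEdges M with hG
  -- step 1: a vertex of M-degree ≥ 2
  have hvex : ∃ v : Fin n, 2 ≤ {e ∈ M | v ∈ e}.ncard := by
    have hne : {d | ∃ v : Fin n, d = {e ∈ M | v ∈ e}.ncard}.Nonempty :=
      ⟨_, ⟨(⟨0, by omega⟩ : Fin n), rfl⟩⟩
    have hbdd : BddAbove {d | ∃ v : Fin n, d = {e ∈ M | v ∈ e}.ncard} := by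
      refine ⟨M.ncard, ?_⟩
      rintro d ⟨v, rfl⟩
      exact Set.ncard_le_ncard (fun e he => he.1) (Set.toFinite _)
    obtain ⟨v, hv⟩ := Nat.sSup_mem hne hbdd
    exact ⟨v, by rw [edgeMaxDeg] at hΔ; omega⟩
  obtain ⟨v, hv⟩ := hvex
  -- step 2-3: a set A0 of ≤ k-1 vertices covering ≥ k edges of M
  set N := {e ∈ M | v ∉ e} with hN
  obtain ⟨C, hC1, hC2⟩ := greedy_cover N (k - 2)
  set A0 : Set (Fin n) := insert v C with hA0
  have hA0card : A0.ncard ≤ k - 1 := (Set.ncard_insert_le v C).trans (by omega)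
  have hNcard : N.ncard = M.ncard - {e ∈ M | v ∈ e}.ncard := by
    have : N = M \ {e ∈ M | v ∈ e} := by
      ext e; simp only [hN, Set.mem_diff, Set.mem_setOf_eq]; tauto
    rw [this, Set.ncard_diff (fun e he => he.1) (Set.toFinite _)]
  have hcover : k ≤ {e ∈ M | ∃ a ∈ A0, a ∈ e}.ncard := by
    have hdisj : Disjoint {e ∈ M | v ∈ e} {e ∈ N | ∃ w ∈ C, w ∈ e} := by
      rw [Set.disjoint_left]
      rintro e ⟨_, hve⟩ ⟨⟨_, hnv⟩, _⟩
      exact hnv hve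
    have hsub : {e ∈ M | v ∈ e} ∪ {e ∈ N | ∃ w ∈ C, w ∈ e} ⊆ {e ∈ M | ∃ a ∈ A0, a ∈ e} := by
      rintro e (⟨heM, hve⟩ | ⟨⟨heM, _⟩, w, hwC, hwe⟩)
      · exact ⟨heM, v, Set.mem_insert v C, hve⟩
      · exact ⟨heM, w, Set.mem_insert_of_mem _ hwC, hwe⟩
    have h1 := Set.ncard_union_eq hdisj (Set.toFinite _) (Set.toFinite _)
    have h2 := Set.ncard_le_ncard hsub (Set.toFinite _)
    omega
  -- step 4: extend A0 to A of size exactly k-1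
  have huniv : (Set.univ : Set (Fin n)).ncard = n := by
    rw [Set.ncard_univ, Nat.card_eq_fintype_card, Fintype.card_fin]
  obtain ⟨A, hA0A, -, hAcard⟩ := Set.exists_subsuperset_card_eq (n := k - 1)
    (Set.subset_univ A0) (hA0card) (by omega)
  have hcoverA : k ≤ {e ∈ M | ∃ a ∈ A, a ∈ e}.ncard := by
    refine hcover.trans (Set.ncard_le_ncard ?_ (Set.toFinite _))
    rintro e ⟨heM, a, haA0, hae⟩
    exact ⟨heM, a, hA0A haA0, hae⟩
  -- step 5: a vertex outside A and the set S
  have hwex : ∃ w : Fin n, w ∉ A := by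
    by_contra hcon
    push_neg at hcon
    have : A = Set.univ := Set.eq_univ_of_forall hcon
    rw [this, huniv] at hAcard
    omega
  obtain ⟨w, hwA⟩ := hwex
  set S : Set (Fin n) := insert w A with hS
  have hScard : S.ncard = k := by
    rw [hS, Set.ncard_insert_of_notMem hwA (Set.toFinite _), hAcard]
    omega
  -- step 7-8: bound steinerEdgeConn G S
  have hbound : steinerEdgeConn G S ≤ c + u := by
    rw [steinerEdgeConn]
    refine csSup_le ⟨0, Fin.elim0, fun i => i.elim0, fun i j _ => i.elim0⟩ ?_
    rintro m ⟨f, hf1, hf2⟩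
    -- the pool of available edges
    set EA := {e ∈ G.edgeSet | ∃ a ∈ A, a ∈ e} with hEA
    -- each tree uses ≥ k-1 edges from the pool
    set E : Fin m → Set (Sym2 (Fin n)) := fun i => {e ∈ (f i).edgeSet | ∃ a ∈ A, a ∈ e} with hE
    have hEcard : ∀ i, k - 1 ≤ (E i).ncard := by
      intro i
      obtain ⟨hSsub, htree⟩ := hf1 i
      have := tree_incident_edges (f i) htree A
        (fun a ha => hSsub (Set.mem_insert_of_mem _ ha)) w
        (hSsub (Set.mem_insert w A)) hwA
      rw [hAcard] at this
      exact this
    have hEsub : ∀ i, E i ⊆ EA := by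
      intro i e ⟨he, hta⟩
      exact ⟨(f i).edgeSet_subset he, hta⟩
    -- edge-disjointness
    have hEdisj : ∀ i j, i ≠ j → Disjoint (E i) (E j) := by
      intro i j hij
      rw [Set.disjoint_left]
      rintro e ⟨hei, -⟩ ⟨hej, -⟩
      have := hf2 i j hij
      rw [EdgeDisjointTrees] at this
      exact absurd (Set.mem_inter hei hej) (by rw [this]; exact Set.notMem_empty e)
    -- counting via finsets
    have hsum : m * (k - 1) ≤ EA.ncard := by
      set F : Fin m → Finset (Sym2 (Fin n)) := fun i => (E i).toFinset with hF
      have hFdisj : ∀ i ∈ Finset.univ, ∀ j ∈ Finset.univ, i ≠ j → Disjoint (F i) (F j) := by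
        intro i _ j _ hij
        rw [hF, Finset.disjoint_left]
        intro e hei hej
        rw [Set.mem_toFinset] at hei hej
        exact Set.disjoint_left.mp (hEdisj i j hij) hei hej
      have hcb := Finset.card_biUnion hFdisj
      have hle : (Finset.univ.biUnion F).card ≤ EA.ncard := by
        rw [← Set.ncard_coe_finset]
        apply Set.ncard_le_ncard ?_ (Set.toFinite _)
        intro e he
        rw [Finset.mem_coe, Finset.mem_biUnion] at he
        obtain ⟨i, -, hei⟩ := he
        rw [hF, Set.mem_toFinset] at hei
        exact hEsub i hei
      have hlow : m * (k - 1) ≤ ∑ i : Fin m, (F i).card := by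
        calc m * (k-1) = (Finset.univ : Finset (Fin m)).card * (k-1) := by
              rw [Finset.card_univ, Fintype.card_fin]
          _ ≤ ∑ i : Fin m, (F i).card := by
              apply Finset.card_nsmul_le_sum
              intro i _
              rw [hF, ← Set.ncard_eq_toFinset_card']
              exact hEcard i
      omega
    -- the pool is small
    obtain ⟨X, hX⟩ : ∃ X, (2 * u + 3) * (c + u + 2) = X := ⟨_, rfl⟩
    have hpool : EA.ncard ≤ X - k := by
      have htop := count_touch A hAcard (by omega)
      set EAtop := {e : Sym2 (Fin n) | ¬ e.IsDiag ∧ ∃ a ∈ A, a ∈ e} with hEAtop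
      set MA := {e ∈ M | ∃ a ∈ A, a ∈ e} with hMA
      have hMAsub : MA ⊆ EAtop := by
        rintro e ⟨heM, hta⟩
        refine ⟨?_, hta⟩
        have := hM heM
        rwa [edgeSet_top, Set.mem_compl_iff, Sym2.mem_diagSet] at this
      have hEAeq : EA = EAtop \ MA := by
        ext e
        constructor
        · rintro ⟨heG, hta⟩
          rw [hG, edgeSet_deleteEdges, edgeSet_top] at heG
          exact ⟨⟨heG.1, hta⟩, fun hc' => heG.2 hc'.1⟩
        · rintro ⟨⟨hd, hta⟩, hnM⟩
          refine ⟨?_, hta⟩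
          rw [hG, edgeSet_deleteEdges, edgeSet_top]
          exact ⟨hd, fun heM => hnM ⟨heM, hta⟩⟩
      have hEAcard : EA.ncard = EAtop.ncard - MA.ncard := by
        rw [hEAeq, Set.ncard_diff hMAsub (Set.toFinite _)]
      -- compute EAtop.ncard
      have hchoose : EAtop.ncard = X := by
        rw [htop, ← hX]
        have h1 : n.choose 2 = n * (n-1) / 2 := Nat.choose_two_right n
        have h2 : (n - (k-1)).choose 2 = (n-(k-1)) * ((n-(k-1)) - 1) / 2 :=
          Nat.choose_two_right _
        have e1 : n * (n - 1) = (c + 2*u + 4) * (c + 2*u + 3) := by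
          rw [hc]; congr 1 <;> omega
        have e2 : (n - (k-1)) * ((n-(k-1)) - 1) = (c+1) * c := by
          have : n - (k-1) = c + 1 := by omega
          rw [this, Nat.add_sub_cancel]
        have e3 : (c + 2*u + 4) * (c + 2*u + 3) = (c+1)*c + 2 * ((2*u+3) * (c+u+2)) := by
          ring
        rw [h1, h2, e1, e2, e3, Nat.add_mul_div_left _ _ (by norm_num : 0 < 2)]
        apply Nat.add_sub_cancel_left
      rw [hchoose] at hEAcard
      omega
    -- final arithmetic
    have hk1 : k - 1 = 2*u + 3 := by omega
    rw [hk1] at hsum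
    obtain ⟨Y, hY⟩ : ∃ Y, m * (2*u+3) = Y := ⟨_, rfl⟩
    obtain ⟨Z, hZ⟩ : ∃ Z, (c+u+1) * (2*u+3) = Z := ⟨_, rfl⟩
    rw [hY] at hsum
    have hXZ : X = Z + (2*u+3) := by rw [← hX, ← hZ]; ring
    have hZpos : 1 ≤ Z := by
      rw [← hZ]; exact Nat.mul_pos (by omega) (by omega)
    have hYZ : Y < Z := by omega
    rw [← hY, ← hZ] at hYZ
    have := Nat.lt_of_mul_lt_mul_right hYZ
    omega
  -- step 6: conclude
  have hle : genEdgeConn G k ≤ steinerEdgeConn G S :=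
    Nat.sInf_le ⟨S, hScard, rfl⟩
  have hfin : n - k / 2 - 1 = c + u + 1 := by omega
  omega
end

section
/- For every two integers n and k with 4 ≤ k ≤ n, if k is even and M is an edge set of the complete graph K_n such that |M| ≥ k and Δ(K_n[M]) = 1 (i.e., M is a matching of K_n of size at least k), then κ_k(K_n \ M) < n − k/2 − 1. -/
open SimpleGraph

variable {V : Type*}

lemma arith_main (n t u a b1 b2 b3 m : ℕ) (ht : 2 ≤ t) (hu : u + 1 = 2*t)
    (hE : a*u + b1 ≤ t*u) (hb1 : b1 ≤ 2*t) (hb2 : b2 + 4*t ≤ n)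
    (hV : b1 + b2 + 2*b3 + 2*t ≤ n) (hm : m = a+b1+b2+b3) : m + t + 2 ≤ n := by
  rcases le_or_gt t a with h | h
  · have h1 : t*u ≤ a*u := Nat.mul_le_mul_right u h
    have hb10 : b1 = 0 := by omega
    have ha : a ≤ t := Nat.le_of_mul_le_mul_right (show a*u ≤ t*u by omega) (show 0 < u by omega)
    omega
  · have hsplit : a*u + (t-a)*u = t*u := by rw [← Nat.add_mul]; congr 1; omega
    have hb1u : b1 ≤ (t-a)*u := by omega
    rcases le_or_gt (t - a) 1 with h2 | h2
    · have he1 : (t-a)*u = u := by rw [show t-a = 1 by omega, one_mul]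
      omega
    · have ha2 : a + 2 ≤ t := by omega
      omega

lemma exists_adj_of_tree {W : Type*} {G : SimpleGraph W} (T : G.Subgraph) (hT : T.coe.IsTree)
    {s w : W} (hs : s ∈ T.verts) (hw : w ∈ T.verts) (hne : s ≠ w) :
    ∃ v, T.Adj s v := by
  obtain ⟨p⟩ := hT.isConnected.preconnected ⟨s, hs⟩ ⟨w, hw⟩
  cases p with
  | nil => exact absurd (by simpa using congrArg Subtype.val (rfl : (⟨s,hs⟩ : T.verts) = ⟨s,hs⟩)) (by simp_all)
  | cons h q => exact ⟨_, h⟩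

open Finset in
lemma count_bound {n t m : ℕ} (ht : 2 ≤ t)
    {M : Set (Sym2 (Fin n))}
    {S P : Finset (Fin n)} (hScard : S.card = 2*t) (hPcard : P.card = 2*t)
    (hSP : Disjoint S P)
    (hpartner : ∀ w ∈ P, ∃ s ∈ S, s(s, w) ∈ M)
    (f : Fin m → ((⊤ : SimpleGraph (Fin n)).deleteEdges M).Subgraph)
    (htree : ∀ i, IsSteinerTree _ (↑S) (f i))
    (hdisj : ∀ i j, i ≠ j → InternallyDisjoint (↑S) (f i) (f j)) :
    m + t + 2 ≤ n := by
  classical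
  have h4t : 4*t ≤ n := by
    have h1 : (S ∪ P).card = 4*t := by
      rw [Finset.card_union_of_disjoint hSP, hScard, hPcard]; ring
    have := Finset.card_le_univ (S ∪ P)
    simpa [h1] using this
  have hn0 : 0 < n := by omega
  -- the sets of external vertices
  set X : Fin m → Finset (Fin n) := fun i => (Set.toFinite ((f i).verts \ ↑S)).toFinset with hXdef
  have hXmem : ∀ i a, a ∈ X i ↔ a ∈ (f i).verts ∧ a ∉ S := by
    intro i a; simp only [hXdef, Set.Finite.mem_toFinset, Set.mem_diff, Finset.mem_coe]
  have hXdisj : ∀ i j, i ≠ j → Disjoint (X i) (X j) := by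
    intro i j hne
    rw [Finset.disjoint_left]
    intro a hai haj
    have h := (hdisj i j hne).2
    have hmem : a ∈ (f i).verts ∩ (f j).verts := ⟨((hXmem i a).1 hai).1, ((hXmem j a).1 haj).1⟩
    rw [h] at hmem
    exact ((hXmem i a).1 hai).2 (by exact_mod_cast hmem)
  -- the sets of internal ordered adjacent pairs
  set D : Fin m → Finset (Fin n × Fin n) :=
    fun i => S.offDiag.filter (fun p => (f i).Adj p.1 p.2) with hDdef
  have hDmem : ∀ i p, p ∈ D i ↔ (p.1 ∈ S ∧ p.2 ∈ S ∧ p.1 ≠ p.2) ∧ (f i).Adj p.1 p.2 := by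
    intro i p; simp [hDdef, Finset.mem_filter, Finset.mem_offDiag, and_assoc]
  have hDdisj : ∀ i j, i ≠ j → Disjoint (D i) (D j) := by
    intro i j hne
    rw [Finset.disjoint_left]
    intro p hpi hpj
    have h := (hdisj i j hne).1
    have hmem : s(p.1, p.2) ∈ (f i).edgeSet ∩ (f j).edgeSet :=
      ⟨((hDmem i p).1 hpi).2, ((hDmem j p).1 hpj).2⟩
    rw [h] at hmem
    exact hmem
  -- sum upper bounds
  have hXsum : ∑ i, (X i).card ≤ n - 2*t := by
    have hsub : Finset.univ.biUnion X ⊆ Finset.univ \ S := by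
      intro a ha
      rcases Finset.mem_biUnion.1 ha with ⟨i, _, hai⟩
      exact Finset.mem_sdiff.2 ⟨Finset.mem_univ a, ((hXmem i a).1 hai).2⟩
    calc ∑ i, (X i).card = (Finset.univ.biUnion X).card :=
          (Finset.card_biUnion (fun i _ j _ h => hXdisj i j h)).symm
      _ ≤ (Finset.univ \ S).card := Finset.card_le_card hsub
      _ = n - 2*t := by
          rw [Finset.card_sdiff_of_subset (Finset.subset_univ S), hScard]
          simp
  have hDsum : ∑ i, (D i).card ≤ 2*t*(2*t) - 2*t := by
    have hsub : Finset.univ.biUnion D ⊆ S.offDiag := by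
      intro p hp
      rcases Finset.mem_biUnion.1 hp with ⟨i, _, hpi⟩
      exact Finset.mem_filter.1 hpi |>.1
    calc ∑ i, (D i).card = (Finset.univ.biUnion D).card :=
          (Finset.card_biUnion (fun i _ j _ h => hDdisj i j h)).symm
      _ ≤ S.offDiag.card := Finset.card_le_card hsub
      _ = 2*t*(2*t) - 2*t := by rw [Finset.offDiag_card, hScard]
  -- witness function
  set wit : Fin m → Fin n := fun i => if h : ∃ w, X i = {w} then h.choose else ⟨0, hn0⟩ with hwitdef
  have hwit_spec : ∀ i, (X i).card = 1 → X i = {wit i} := by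
    intro i h
    have h' : ∃ w, X i = {w} := Finset.card_eq_one.1 h
    simp only [hwitdef, dif_pos h']
    exact h'.choose_spec
  -- classification
  set A := Finset.univ.filter (fun i : Fin m => (X i).card = 0) with hA
  set B1 := Finset.univ.filter (fun i : Fin m => (X i).card = 1 ∧ X i ⊆ P) with hB1
  set B2 := Finset.univ.filter (fun i : Fin m => (X i).card = 1 ∧ ¬ X i ⊆ P) with hB2
  set B3 := Finset.univ.filter (fun i : Fin m => 2 ≤ (X i).card) with hB3
  have hd1 : Disjoint A B1 := by
    rw [Finset.disjoint_left]; intro i hi hj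
    simp only [hA, hB1, Finset.mem_filter, Finset.mem_univ, true_and] at hi hj
    omega
  have hd2 : Disjoint A B2 := by
    rw [Finset.disjoint_left]; intro i hi hj
    simp only [hA, hB2, Finset.mem_filter, Finset.mem_univ, true_and] at hi hj
    omega
  have hd3 : Disjoint A B3 := by
    rw [Finset.disjoint_left]; intro i hi hj
    simp only [hA, hB3, Finset.mem_filter, Finset.mem_univ, true_and] at hi hj
    omega
  have hd4 : Disjoint B1 B2 := by
    rw [Finset.disjoint_left]; intro i hi hj
    simp only [hB1, hB2, Finset.mem_filter, Finset.mem_univ, true_and] at hi hj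
    exact hj.2 hi.2
  have hd5 : Disjoint B1 B3 := by
    rw [Finset.disjoint_left]; intro i hi hj
    simp only [hB1, hB3, Finset.mem_filter, Finset.mem_univ, true_and] at hi hj
    omega
  have hd6 : Disjoint B2 B3 := by
    rw [Finset.disjoint_left]; intro i hi hj
    simp only [hB2, hB3, Finset.mem_filter, Finset.mem_univ, true_and] at hi hj
    omega
  have d_AB1B2 : Disjoint (A ∪ B1) B2 := Finset.disjoint_union_left.2 ⟨hd2, hd4⟩
  have d_big : Disjoint ((A ∪ B1) ∪ B2) B3 :=
    Finset.disjoint_union_left.2 ⟨Finset.disjoint_union_left.2 ⟨hd3, hd5⟩, hd6⟩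
  have hU : ((A ∪ B1) ∪ B2) ∪ B3 = Finset.univ := by
    ext i
    simp only [hA, hB1, hB2, hB3, Finset.mem_union, Finset.mem_filter, Finset.mem_univ,
      true_and, iff_true]
    by_cases hq : X i ⊆ P <;>
      rcases (show (X i).card = 0 ∨ (X i).card = 1 ∨ 2 ≤ (X i).card by omega) with h|h|h <;>
      tauto
  have hpart : A.card + B1.card + B2.card + B3.card = m := by
    have hcu := congrArg Finset.card hU
    rw [Finset.card_union_of_disjoint d_big, Finset.card_union_of_disjoint d_AB1B2,
      Finset.card_union_of_disjoint hd1, Finset.card_univ, Fintype.card_fin] at hcu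
    omega
  -- bound for trees with no external vertices
  have hAbound : ∀ i ∈ A, 2*(2*t-1) ≤ (D i).card := by
    intro i hi
    have hX0 : X i = ∅ := Finset.card_eq_zero.1 (Finset.mem_filter.1 hi).2
    have hverts : (f i).verts = ↑S := by
      apply Set.Subset.antisymm
      · intro a ha
        by_contra hns
        have : a ∈ X i := (hXmem i a).2 ⟨ha, hns⟩
        simp [hX0] at this
      · exact (htree i).1
    have hT := (htree i).2
    have hcardV : Fintype.card ↥(f i).verts = 2*t := by
      rw [← Nat.card_eq_fintype_card, Nat.card_coe_set_eq, hverts, Set.ncard_coe_finset,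
        hScard]
    have hedge : (f i).coe.edgeFinset.card + 1 = 2*t := by
      rw [← hcardV]; exact hT.card_edgeFinset
    have hdart : Fintype.card (f i).coe.Dart = 2*(2*t) - 2 := by
      rw [SimpleGraph.dart_card_eq_twice_card_edges]; omega
    have hmap : ∀ d : (f i).coe.Dart, ((d.toProd.1 : Fin n), (d.toProd.2 : Fin n)) ∈ D i := by
      intro d
      have hadj : (f i).Adj d.toProd.1 d.toProd.2 := d.adj
      refine (hDmem i _).2 ⟨⟨?_, ?_, hadj.ne⟩, hadj⟩
      · exact hverts.subset d.toProd.1.2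
      · exact hverts.subset d.toProd.2.2
    have hinj2 : Function.Injective
        (fun d : (f i).coe.Dart => (⟨((d.toProd.1 : Fin n), (d.toProd.2 : Fin n)), hmap d⟩ : ↥(D i))) := by
      intro d1 d2 h12
      have h' := congrArg Subtype.val h12
      apply SimpleGraph.Dart.ext
      exact Prod.ext (Subtype.ext (congrArg Prod.fst h')) (Subtype.ext (congrArg Prod.snd h'))
    have hle := Fintype.card_le_of_injective _ hinj2
    rw [hdart, Fintype.card_coe] at hle
    omega
  -- bound for trees with a single external partner vertex
  have hB1bound : ∀ i ∈ B1, 2 ≤ (D i).card := by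
    intro i hi
    obtain ⟨hc1, hsubP⟩ := (Finset.mem_filter.1 hi).2
    have hXw : X i = {wit i} := hwit_spec i hc1
    have hwP : wit i ∈ P := hsubP (by rw [hXw]; exact Finset.mem_singleton_self _)
    obtain ⟨s, hsS, hsM⟩ := hpartner _ hwP
    have hsverts : s ∈ (f i).verts := (htree i).1 hsS
    have hwverts : wit i ∈ (f i).verts :=
      ((hXmem i _).1 (by rw [hXw]; exact Finset.mem_singleton_self _)).1
    have hsw : s ≠ wit i := fun h => (Finset.disjoint_left.1 hSP hsS) (h ▸ hwP)
    obtain ⟨v, hadj⟩ := exists_adj_of_tree (f i) (htree i).2 hsverts hwverts hsw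
    have hvverts : v ∈ (f i).verts := hadj.snd_mem
    have hGadj : ((⊤ : SimpleGraph (Fin n)).deleteEdges M).Adj s v := hadj.adj_sub
    have hvw : v ≠ wit i := by
      intro h
      subst h
      rw [SimpleGraph.deleteEdges_adj] at hGadj
      exact hGadj.2 hsM
    have hvS : v ∈ S := by
      by_contra hns
      have hmemX : v ∈ X i := (hXmem i v).2 ⟨hvverts, hns⟩
      rw [hXw, Finset.mem_singleton] at hmemX
      exact hvw hmemX
    have hsv : s ≠ v := hGadj.ne
    have hpair : ({(s,v), (v,s)} : Finset (Fin n × Fin n)) ⊆ D i := by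
      intro p hp
      rw [Finset.mem_insert, Finset.mem_singleton] at hp
      rcases hp with rfl | rfl
      · exact (hDmem i _).2 ⟨⟨hsS, hvS, hsv⟩, hadj⟩
      · exact (hDmem i _).2 ⟨⟨hvS, hsS, hsv.symm⟩, hadj.symm⟩
    have hcard2 : ({(s,v), (v,s)} : Finset (Fin n × Fin n)).card = 2 := by
      rw [Finset.card_insert_of_notMem (by simp [Prod.ext_iff]; intro h; exact absurd h hsv),
        Finset.card_singleton]
    calc (2:ℕ) = ({(s,v), (v,s)} : Finset (Fin n × Fin n)).card := hcard2.symm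
      _ ≤ (D i).card := Finset.card_le_card hpair
  -- injectivity of the witness on one-element classes
  have hwitinj : ∀ i j : Fin m, (X i).card = 1 → (X j).card = 1 → wit i = wit j → i = j := by
    intro i j hi hj hij
    by_contra hne
    have h1 : wit i ∈ X i := by rw [hwit_spec i hi]; exact Finset.mem_singleton_self _
    have h2 : wit j ∈ X j := by rw [hwit_spec j hj]; exact Finset.mem_singleton_self _
    rw [hij] at h1
    exact Finset.disjoint_left.1 (hXdisj i j hne) h1 h2
  have hb1card : B1.card ≤ 2*t := by
    rw [← hPcard]
    apply Finset.card_le_card_of_injOn wit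
    · intro i hi
      obtain ⟨hc1, hsubP⟩ := (Finset.mem_filter.1 hi).2
      exact hsubP (by rw [hwit_spec i hc1]; exact Finset.mem_singleton_self _)
    · intro i hi j hj hij
      exact hwitinj i j (Finset.mem_filter.1 (Finset.mem_coe.1 hi)).2.1
        (Finset.mem_filter.1 (Finset.mem_coe.1 hj)).2.1 hij
  have hb2card : B2.card + 4*t ≤ n := by
    have hle : B2.card ≤ (Finset.univ \ (S ∪ P)).card := by
      apply Finset.card_le_card_of_injOn wit
      · intro i hi
        obtain ⟨hc1, hnsub⟩ := (Finset.mem_filter.1 (Finset.mem_coe.1 hi)).2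
        have hXw := hwit_spec i hc1
        have hmemX : wit i ∈ X i := by rw [hXw]; exact Finset.mem_singleton_self _
        have hnotS : wit i ∉ S := ((hXmem i _).1 hmemX).2
        have hnotP : wit i ∉ P := by
          intro hP
          apply hnsub
          rw [hXw]
          intro x hx
          rw [Finset.mem_singleton] at hx
          rwa [hx]
        simp [Finset.mem_sdiff, hnotS, hnotP]
      · intro i hi j hj hij
        exact hwitinj i j (Finset.mem_filter.1 (Finset.mem_coe.1 hi)).2.1
          (Finset.mem_filter.1 (Finset.mem_coe.1 hj)).2.1 hij
    have hcardsd : (Finset.univ \ (S ∪ P)).card = n - 4*t := by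
      rw [Finset.card_sdiff_of_subset (Finset.subset_univ _), Finset.card_union_of_disjoint hSP, hScard,
        hPcard, Finset.card_univ, Fintype.card_fin]
      omega
    omega
  -- splitting sums over classes
  have hsum_split : ∀ g : Fin m → ℕ,
      ∑ i, g i = (∑ i ∈ A, g i) + (∑ i ∈ B1, g i) + (∑ i ∈ B2, g i) + (∑ i ∈ B3, g i) := by
    intro g
    conv_lhs => rw [← hU]
    rw [Finset.sum_union d_big, Finset.sum_union d_AB1B2, Finset.sum_union hd1]
  have lb : ∀ (C : Finset (Fin m)) (c : ℕ) (g : Fin m → ℕ),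
      (∀ i ∈ C, c ≤ g i) → C.card * c ≤ ∑ i ∈ C, g i := by
    intro C c g h
    calc C.card * c = ∑ _i ∈ C, c := by rw [Finset.sum_const, smul_eq_mul]
      _ ≤ ∑ i ∈ C, g i := Finset.sum_le_sum h
  have hDlow : A.card * (2*(2*t-1)) + B1.card * 2 ≤ ∑ i, (D i).card := by
    have hs : ∑ i, (D i).card = (∑ i ∈ A, (D i).card) + (∑ i ∈ B1, (D i).card)
        + (∑ i ∈ B2, (D i).card) + (∑ i ∈ B3, (D i).card) := hsum_split _
    have h1 : A.card * (2*(2*t-1)) ≤ ∑ i ∈ A, (D i).card := lb _ _ _ hAbound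
    have h2 : B1.card * 2 ≤ ∑ i ∈ B1, (D i).card := lb _ _ _ hB1bound
    omega
  have hXlow : B1.card * 1 + B2.card * 1 + B3.card * 2 ≤ ∑ i, (X i).card := by
    have hs : ∑ i, (X i).card = (∑ i ∈ A, (X i).card) + (∑ i ∈ B1, (X i).card)
        + (∑ i ∈ B2, (X i).card) + (∑ i ∈ B3, (X i).card) := hsum_split _
    have h1 : B1.card * 1 ≤ ∑ i ∈ B1, (X i).card := lb _ _ _ (fun i hi => by
      have := (Finset.mem_filter.1 hi).2.1; omega)
    have h2 : B2.card * 1 ≤ ∑ i ∈ B2, (X i).card := lb _ _ _ (fun i hi => by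
      have := (Finset.mem_filter.1 hi).2.1; omega)
    have h3 : B3.card * 2 ≤ ∑ i ∈ B3, (X i).card := lb _ _ _ (fun i hi =>
      (Finset.mem_filter.1 hi).2)
    omega
  -- final arithmetic
  refine arith_main n t (2*t-1) A.card B1.card B2.card B3.card m ht (by omega) ?_ hb1card
    hb2card ?_ (by omega)
  · have e1 : 2*(A.card*(2*t-1) + B1.card) = A.card * (2*(2*t-1)) + B1.card * 2 := by ring
    have hkey : 2*(t*(2*t-1)) + 2*t = 2*t*(2*t) := by
      have h1 : (2*t-1)+1 = 2*t := by omega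
      calc 2*(t*(2*t-1)) + 2*t = 2*t*((2*t-1)+1) := by ring
        _ = 2*t*(2*t) := by rw [h1]
    have h2 : 2*(A.card*(2*t-1) + B1.card) ≤ 2*(t*(2*t-1)) := by omega
    exact Nat.le_of_mul_le_mul_left h2 (by omega)
  · omega

theorem stmt12 (n k : ℕ) (hk4 : 4 ≤ k) (hkn : k ≤ n) (hkeven : Even k)
    (M : Set (Sym2 (Fin n))) (hM : M ⊆ (⊤ : SimpleGraph (Fin n)).edgeSet)
    (hMcard : k ≤ M.ncard) (hΔ : edgeMaxDeg M = 1) :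
    genConn ((⊤ : SimpleGraph (Fin n)).deleteEdges M) k < n - k / 2 - 1 := by
  classical
  obtain ⟨t, htk⟩ := hkeven
  have htk' : k = 2*t := by omega
  have ht2 : 2 ≤ t := by omega
  -- every vertex is in at most one edge of M
  have hbdd : BddAbove {d | ∃ v : Fin n, d = {e ∈ M | v ∈ e}.ncard} := by
    have hEq : {d | ∃ v : Fin n, d = {e ∈ M | v ∈ e}.ncard}
        = Set.range (fun v : Fin n => {e ∈ M | v ∈ e}.ncard) := by
      ext d; simp [eq_comm]
    rw [hEq]; exact (Set.finite_range _).bddAbove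
  have hmat : ∀ v : Fin n, {e ∈ M | v ∈ e}.ncard ≤ 1 := fun v => hΔ ▸ le_csSup hbdd ⟨v, rfl⟩
  have hdisjM : ∀ e₁ ∈ M, ∀ e₂ ∈ M, ∀ v : Fin n, v ∈ e₁ → v ∈ e₂ → e₁ = e₂ := by
    intro e₁ h₁ e₂ h₂ v hv₁ hv₂
    by_contra hne
    have hsub : ({e₁, e₂} : Set (Sym2 (Fin n))) ⊆ {e ∈ M | v ∈ e} := by
      intro e he
      rcases he with he | he
      · subst he; exact ⟨h₁, hv₁⟩
      · rw [he]; exact ⟨h₂, hv₂⟩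
    have h2 : (2:ℕ) ≤ {e ∈ M | v ∈ e}.ncard := by
      rw [← Set.ncard_pair hne]
      exact Set.ncard_le_ncard hsub (Set.toFinite _)
    have := hmat v
    omega
  -- select k edges of M
  have hfin : M.Finite := Set.toFinite M
  have hcardF : k ≤ hfin.toFinset.card := by
    rwa [← Set.ncard_eq_toFinset_card M hfin]
  obtain ⟨F, hFsub, hFcard⟩ := Finset.exists_subset_card_eq hcardF
  have hFM : ∀ e ∈ F, e ∈ M := fun e he => hfin.mem_toFinset.1 (hFsub he)
  have hout : ∀ e : Sym2 (Fin n), s(e.out.1, e.out.2) = e := fun e => by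
    rw [Sym2.mk]; exact e.out_eq
  have hndiag : ∀ e ∈ F, e.out.1 ≠ e.out.2 := by
    intro e he h
    have hdiag : e.IsDiag := by rw [← hout e]; exact Sym2.mk_isDiag_iff.2 h
    have := hM (hFM e he)
    rw [SimpleGraph.edgeSet_top] at this
    exact this hdiag
  set S : Finset (Fin n) := F.image (fun e => e.out.1) with hSdef
  set P : Finset (Fin n) := F.image (fun e => e.out.2) with hPdef
  have hScard : S.card = 2*t := by
    rw [hSdef, Finset.card_image_of_injOn, hFcard, htk']
    intro e₁ h₁ e₂ h₂ h
    simp only at h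
    exact hdisjM e₁ (hFM _ h₁) e₂ (hFM _ h₂) e₁.out.1 (Sym2.out_fst_mem e₁)
      (by rw [h]; exact Sym2.out_fst_mem e₂)
  have hPcard : P.card = 2*t := by
    rw [hPdef, Finset.card_image_of_injOn, hFcard, htk']
    intro e₁ h₁ e₂ h₂ h
    simp only at h
    exact hdisjM e₁ (hFM _ h₁) e₂ (hFM _ h₂) e₁.out.2 (Sym2.out_snd_mem e₁)
      (by rw [h]; exact Sym2.out_snd_mem e₂)
  have hSP : Disjoint S P := by
    rw [Finset.disjoint_left]
    intro a haS haP
    rw [hSdef, Finset.mem_image] at haS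
    rw [hPdef, Finset.mem_image] at haP
    obtain ⟨e₁, h₁, he₁⟩ := haS
    obtain ⟨e₂, h₂, he₂⟩ := haP
    have : e₁ = e₂ := hdisjM e₁ (hFM _ h₁) e₂ (hFM _ h₂) a (by rw [← he₁]; exact Sym2.out_fst_mem e₁)
      (by rw [← he₂]; exact Sym2.out_snd_mem e₂)
    subst this
    exact hndiag e₁ h₁ (he₁.trans he₂.symm)
  have hpartner : ∀ w ∈ P, ∃ s ∈ S, s(s, w) ∈ M := by
    intro w hw
    rw [hPdef, Finset.mem_image] at hw
    obtain ⟨e, he, hwe⟩ := hw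
    refine ⟨e.out.1, Finset.mem_image_of_mem _ he, ?_⟩
    rw [← hwe, hout e]
    exact hFM e he
  set G := (⊤ : SimpleGraph (Fin n)).deleteEdges M with hGdef
  have hsteiner : steinerConn G (↑S) ≤ n - t - 2 := by
    apply csSup_le'
    rintro m ⟨f, htreem, hdisjT⟩
    have hb := count_bound ht2 hScard hPcard hSP hpartner f htreem hdisjT
    omega
  have hmemgen : steinerConn G (↑S)
      ∈ {m | ∃ S0 : Set (Fin n), S0.ncard = k ∧ steinerConn G S0 = m} :=
    ⟨↑S, by rw [Set.ncard_coe_finset, hScard, htk'], rfl⟩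
  have hgen : genConn G k ≤ steinerConn G (↑S) := Nat.sInf_le hmemgen
  have hfinal := hgen.trans hsteiner
  have h2t : 2*t ≤ n := by omega
  unfold G at hfinal
  omega
end
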